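/- Let Γ be a multiset of D-formulas and let G be a G-formula. Then the sequent Γ → G has a C-proof if and only if it has an I_G-proof containing no occurrences of the ∨-L rule. -/

import Mathlib

set_option maxHeartbeats 1000000

/-- Terms of a first-order language: variables (de Bruijn indices for
quantified variables) and constants. -/
inductive Tm : Type
  | var : ℕ → Tm
  | const : ℕ → Tm

namespace Tm

/-- Substitution of the term `u` for the variable with index `k`. -/
def subst (k : ℕ) (u : Tm) : Tm → Tm
  | var n => if n = k then u else var n
  | const c => const c

/-- The constant `c` occurs in a term. -/
def constIn (c : ℕ) : Tm → Prop
  | var _ => False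
  | const d => d = c

end Tm

/-- First-order formulas over the primitives ⊤, ⊥, ∧, ∨, ⊃, ∃, ∀.
Quantifiers are represented with de Bruijn indices. -/
inductive Fm : Type
  | top : Fm
  | bot : Fm
  | atom : ℕ → List Tm → Fm
  | conj : Fm → Fm → Fm
  | disj : Fm → Fm → Fm
  | imp : Fm → Fm → Fm
  | ex : Fm → Fm
  | all : Fm → Fm

namespace Fm

/-- Substitution of a term for the variable with de Bruijn index `k`. -/
def subst (k : ℕ) (u : Tm) : Fm → Fm
  | top => top
  | bot => bot
  | atom p ts => atom p (ts.map (Tm.subst k u))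
  | conj a b => conj (subst k u a) (subst k u b)
  | disj a b => disj (subst k u a) (subst k u b)
  | imp a b => imp (subst k u a) (subst k u b)
  | ex a => ex (subst (k + 1) u a)
  | all a => all (subst (k + 1) u a)

/-- `[t/x]B`: instantiation of the outermost bound variable of the body of a
quantified formula with the term `u`. -/
def inst (u : Tm) (a : Fm) : Fm := subst 0 u a

/-- Atomic formulas (⊤ and ⊥ are *not* atomic). -/
def isAtom : Fm → Prop
  | atom _ _ => True
  | _ => False

/-- Formulas that need no right-introduction rule in a uniform/O_G proof:
atomic formulas and ⊥. -/
def neutral (F : Fm) : Prop := F.isAtom ∨ F = bot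

/-- The constant `c` occurs in a formula. -/
def constIn (c : ℕ) : Fm → Prop
  | top => False
  | bot => False
  | atom _ ts => ∃ t ∈ ts, t.constIn c
  | conj a b => constIn c a ∨ constIn c b
  | disj a b => constIn c a ∨ constIn c b
  | imp a b => constIn c a ∨ constIn c b
  | ex a => constIn c a
  | all a => constIn c a

end Fm

/-- The eigenvariable (constant) `c` does not occur in the sequent `Γ → Δ`. -/
def FreshSeq (c : ℕ) (Γ Δ : Multiset Fm) : Prop :=
  (∀ F ∈ Γ, ¬ F.constIn c) ∧ ∀ F ∈ Δ, ¬ F.constIn c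

/-- The sequent `Γ → Δ` is an axiom: ⊤ ∈ Δ, or some `A` that is ⊥ or atomic
belongs to both `Γ` and `Δ`. -/
def AxSeq (Γ Δ : Multiset Fm) : Prop :=
  Fm.top ∈ Δ ∨ ∃ A : Fm, (A = Fm.bot ∨ A.isAtom) ∧ A ∈ Γ ∧ A ∈ Δ

/-- C-proofs: arbitrary derivations in the sequent calculus of the paper.
Sequents are pairs of multisets of formulas. -/
inductive CProof : Multiset Fm → Multiset Fm → Type
  | ax {Γ Δ : Multiset Fm} (h : AxSeq Γ Δ) : CProof Γ Δ
  | contrL {B : Fm} {Γ Δ : Multiset Fm} (p : CProof (B ::ₘ B ::ₘ Γ) Δ) : CProof (B ::ₘ Γ) Δ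
  | contrR {B : Fm} {Γ Δ : Multiset Fm} (p : CProof Γ (B ::ₘ B ::ₘ Δ)) : CProof Γ (B ::ₘ Δ)
  | botR {D : Fm} {Γ Δ : Multiset Fm} (p : CProof Γ (Fm.bot ::ₘ Δ)) : CProof Γ (D ::ₘ Δ)
  | andL {B D : Fm} {Γ Δ : Multiset Fm} (p : CProof (B ::ₘ D ::ₘ (B.conj D) ::ₘ Γ) Δ) :
      CProof ((B.conj D) ::ₘ Γ) Δ
  | andR {B D : Fm} {Γ Δ : Multiset Fm} (p : CProof Γ (B ::ₘ Δ)) (q : CProof Γ (D ::ₘ Δ)) :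
      CProof Γ ((B.conj D) ::ₘ Δ)
  | orL {B D : Fm} {Γ Δ : Multiset Fm} (p : CProof (B ::ₘ Γ) Δ) (q : CProof (D ::ₘ Γ) Δ) :
      CProof ((B.disj D) ::ₘ Γ) Δ
  | orR1 {B D : Fm} {Γ Δ : Multiset Fm} (p : CProof Γ (B ::ₘ Δ)) : CProof Γ ((B.disj D) ::ₘ Δ)
  | orR2 {B D : Fm} {Γ Δ : Multiset Fm} (p : CProof Γ (D ::ₘ Δ)) : CProof Γ ((B.disj D) ::ₘ Δ)
  | impL {B D : Fm} {Γ Δ Θ : Multiset Fm} (p : CProof ((B.imp D) ::ₘ Γ) (B ::ₘ Δ))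
      (q : CProof (D ::ₘ Γ) Θ) : CProof ((B.imp D) ::ₘ Γ) (Δ + Θ)
  | impR {B D : Fm} {Γ Δ : Multiset Fm} (p : CProof (B ::ₘ Γ) (D ::ₘ Δ)) :
      CProof Γ ((B.imp D) ::ₘ Δ)
  | allL {B : Fm} {Γ Δ : Multiset Fm} (t : Tm)
      (p : CProof ((B.inst t) ::ₘ (Fm.all B) ::ₘ Γ) Δ) : CProof ((Fm.all B) ::ₘ Γ) Δ
  | exR {B : Fm} {Γ Δ : Multiset Fm} (t : Tm) (p : CProof Γ ((B.inst t) ::ₘ Δ)) :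
      CProof Γ ((Fm.ex B) ::ₘ Δ)
  | exL {B : Fm} {Γ Δ : Multiset Fm} (c : ℕ) (hc : FreshSeq c ((Fm.ex B) ::ₘ Γ) Δ)
      (p : CProof ((B.inst (Tm.const c)) ::ₘ Γ) Δ) : CProof ((Fm.ex B) ::ₘ Γ) Δ
  | allR {B : Fm} {Γ Δ : Multiset Fm} (c : ℕ) (hc : FreshSeq c Γ ((Fm.all B) ::ₘ Δ))
      (p : CProof Γ ((B.inst (Tm.const c)) ::ₘ Δ)) : CProof Γ ((Fm.all B) ::ₘ Δ)

namespace CProof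

/-- An I-proof is a C-proof in which every sequent has exactly one formula in
its succedent. -/
def isI : ∀ (Γ Δ : Multiset Fm), CProof Γ Δ → Prop
  | _, _, @ax _ Δ _ => Multiset.card Δ = 1
  | _, _, @contrL _ _ Δ p => Multiset.card Δ = 1 ∧ isI _ _ p
  | _, _, @contrR B _ Δ p => Multiset.card (B ::ₘ Δ) = 1 ∧ isI _ _ p
  | _, _, @botR D _ Δ p => Multiset.card (D ::ₘ Δ) = 1 ∧ isI _ _ p
  | _, _, @andL _ _ _ Δ p => Multiset.card Δ = 1 ∧ isI _ _ p
  | _, _, @andR B D _ Δ p q => Multiset.card ((B.conj D) ::ₘ Δ) = 1 ∧ isI _ _ p ∧ isI _ _ q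
  | _, _, @orL _ _ _ Δ p q => Multiset.card Δ = 1 ∧ isI _ _ p ∧ isI _ _ q
  | _, _, @orR1 B D _ Δ p => Multiset.card ((B.disj D) ::ₘ Δ) = 1 ∧ isI _ _ p
  | _, _, @orR2 B D _ Δ p => Multiset.card ((B.disj D) ::ₘ Δ) = 1 ∧ isI _ _ p
  | _, _, @impL _ _ _ Δ Θ p q => Multiset.card (Δ + Θ) = 1 ∧ isI _ _ p ∧ isI _ _ q
  | _, _, @impR B D _ Δ p => Multiset.card ((B.imp D) ::ₘ Δ) = 1 ∧ isI _ _ p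
  | _, _, @allL _ _ Δ _ p => Multiset.card Δ = 1 ∧ isI _ _ p
  | _, _, @exR B _ Δ _ p => Multiset.card ((Fm.ex B) ::ₘ Δ) = 1 ∧ isI _ _ p
  | _, _, @exL _ _ Δ _ _ p => Multiset.card Δ = 1 ∧ isI _ _ p
  | _, _, @allR B _ Δ _ _ p => Multiset.card ((Fm.all B) ::ₘ Δ) = 1 ∧ isI _ _ p

end CProof

/-- Classical provability: `Γ ⊢_C F`. -/
def CProv (Γ : Multiset Fm) (F : Fm) : Prop := Nonempty (CProof Γ ({F} : Multiset Fm))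

/-- Intuitionistic provability: `Γ ⊢_I F`. -/
def IProv (Γ : Multiset Fm) (F : Fm) : Prop := ∃ p : CProof Γ ({F} : Multiset Fm), p.isI

namespace CProof

open Classical in
/-- The nonconstructiveness measure of a C-proof: the number of
nonconstructive occurrences of ∨-L and ⊃-R rules in it. -/
noncomputable def mu : ∀ (Γ Δ : Multiset Fm), CProof Γ Δ → ℕ
  | _, _, ax _ => 0
  | _, _, contrL p => mu _ _ p
  | _, _, contrR p => mu _ _ p
  | _, _, botR p => mu _ _ p
  | _, _, andL p => mu _ _ p
  | _, _, andR p q => mu _ _ p + mu _ _ q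
  | _, _, @orL B D Γ Δ p q =>
      mu _ _ p + mu _ _ q +
        (if ∃ F ∈ Δ, IProv (B ::ₘ Γ) F ∧ IProv (D ::ₘ Γ) F then 0 else 1)
  | _, _, orR1 p => mu _ _ p
  | _, _, orR2 p => mu _ _ p
  | _, _, impL p q => mu _ _ p + mu _ _ q
  | _, _, @impR B D Γ _ p => mu _ _ p + (if IProv (B ::ₘ Γ) D then 0 else 1)
  | _, _, allL _ p => mu _ _ p
  | _, _, exR _ p => mu _ _ p
  | _, _, exL _ _ p => mu _ _ p
  | _, _, allR _ _ p => mu _ _ p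

/-- The sequent `S → P` appears in the given C-proof. -/
def occursSeq : ∀ (Γ Δ : Multiset Fm), CProof Γ Δ → Multiset Fm → Multiset Fm → Prop
  | _, _, @ax Γ Δ _, S, P => Γ = S ∧ Δ = P
  | _, _, @contrL B Γ Δ p, S, P => ((B ::ₘ Γ) = S ∧ Δ = P) ∨ occursSeq _ _ p S P
  | _, _, @contrR B Γ Δ p, S, P => (Γ = S ∧ (B ::ₘ Δ) = P) ∨ occursSeq _ _ p S P
  | _, _, @botR D Γ Δ p, S, P => (Γ = S ∧ (D ::ₘ Δ) = P) ∨ occursSeq _ _ p S P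
  | _, _, @andL B D Γ Δ p, S, P => (((B.conj D) ::ₘ Γ) = S ∧ Δ = P) ∨ occursSeq _ _ p S P
  | _, _, @andR B D Γ Δ p q, S, P =>
      (Γ = S ∧ ((B.conj D) ::ₘ Δ) = P) ∨ occursSeq _ _ p S P ∨ occursSeq _ _ q S P
  | _, _, @orL B D Γ Δ p q, S, P =>
      (((B.disj D) ::ₘ Γ) = S ∧ Δ = P) ∨ occursSeq _ _ p S P ∨ occursSeq _ _ q S P
  | _, _, @orR1 B D Γ Δ p, S, P => (Γ = S ∧ ((B.disj D) ::ₘ Δ) = P) ∨ occursSeq _ _ p S P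
  | _, _, @orR2 B D Γ Δ p, S, P => (Γ = S ∧ ((B.disj D) ::ₘ Δ) = P) ∨ occursSeq _ _ p S P
  | _, _, @impL B D Γ Δ Θ p q, S, P =>
      (((B.imp D) ::ₘ Γ) = S ∧ (Δ + Θ) = P) ∨ occursSeq _ _ p S P ∨ occursSeq _ _ q S P
  | _, _, @impR B D Γ Δ p, S, P => (Γ = S ∧ ((B.imp D) ::ₘ Δ) = P) ∨ occursSeq _ _ p S P
  | _, _, @allL B Γ Δ _ p, S, P => (((Fm.all B) ::ₘ Γ) = S ∧ Δ = P) ∨ occursSeq _ _ p S P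
  | _, _, @exR B Γ Δ _ p, S, P => (Γ = S ∧ ((Fm.ex B) ::ₘ Δ) = P) ∨ occursSeq _ _ p S P
  | _, _, @exL B Γ Δ _ _ p, S, P => (((Fm.ex B) ::ₘ Γ) = S ∧ Δ = P) ∨ occursSeq _ _ p S P
  | _, _, @allR B Γ Δ _ _ p, S, P => (Γ = S ∧ ((Fm.all B) ::ₘ Δ) = P) ∨ occursSeq _ _ p S P

/-- `hasImpR p B S P D` holds when an ⊃-R rule with upper sequent
`B,S → P,D` and lower sequent `S → P,B⊃D` occurs in the proof `p`. -/
def hasImpR : ∀ (Γ Δ : Multiset Fm), CProof Γ Δ → Fm → Multiset Fm → Multiset Fm → Fm → Prop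
  | _, _, ax _, _, _, _, _ => False
  | _, _, contrL p, B, S, P, D => hasImpR _ _ p B S P D
  | _, _, contrR p, B, S, P, D => hasImpR _ _ p B S P D
  | _, _, botR p, B, S, P, D => hasImpR _ _ p B S P D
  | _, _, andL p, B, S, P, D => hasImpR _ _ p B S P D
  | _, _, andR p q, B, S, P, D => hasImpR _ _ p B S P D ∨ hasImpR _ _ q B S P D
  | _, _, orL p q, B, S, P, D => hasImpR _ _ p B S P D ∨ hasImpR _ _ q B S P D
  | _, _, orR1 p, B, S, P, D => hasImpR _ _ p B S P D
  | _, _, orR2 p, B, S, P, D => hasImpR _ _ p B S P D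
  | _, _, impL p q, B, S, P, D => hasImpR _ _ p B S P D ∨ hasImpR _ _ q B S P D
  | _, _, @impR B' D' Γ' Δ' p, B, S, P, D =>
      (B' = B ∧ Γ' = S ∧ Δ' = P ∧ D' = D) ∨ hasImpR _ _ p B S P D
  | _, _, allL _ p, B, S, P, D => hasImpR _ _ p B S P D
  | _, _, exR _ p, B, S, P, D => hasImpR _ _ p B S P D
  | _, _, exL _ _ p, B, S, P, D => hasImpR _ _ p B S P D
  | _, _, allR _ _ p, B, S, P, D => hasImpR _ _ p B S P D

/-- `hasOrL p B D S P` holds when an ∨-L rule with upper sequents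
`B,S → P` and `D,S → P` and lower sequent `B∨D,S → P` occurs in `p`. -/
def hasOrL : ∀ (Γ Δ : Multiset Fm), CProof Γ Δ → Fm → Fm → Multiset Fm → Multiset Fm → Prop
  | _, _, ax _, _, _, _, _ => False
  | _, _, contrL p, B, D, S, P => hasOrL _ _ p B D S P
  | _, _, contrR p, B, D, S, P => hasOrL _ _ p B D S P
  | _, _, botR p, B, D, S, P => hasOrL _ _ p B D S P
  | _, _, andL p, B, D, S, P => hasOrL _ _ p B D S P
  | _, _, andR p q, B, D, S, P => hasOrL _ _ p B D S P ∨ hasOrL _ _ q B D S P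
  | _, _, @orL B' D' Γ' Δ' p q, B, D, S, P =>
      (B' = B ∧ D' = D ∧ Γ' = S ∧ Δ' = P) ∨ hasOrL _ _ p B D S P ∨ hasOrL _ _ q B D S P
  | _, _, orR1 p, B, D, S, P => hasOrL _ _ p B D S P
  | _, _, orR2 p, B, D, S, P => hasOrL _ _ p B D S P
  | _, _, impL p q, B, D, S, P => hasOrL _ _ p B D S P ∨ hasOrL _ _ q B D S P
  | _, _, impR p, B, D, S, P => hasOrL _ _ p B D S P
  | _, _, allL _ p, B, D, S, P => hasOrL _ _ p B D S P
  | _, _, exR _ p, B, D, S, P => hasOrL _ _ p B D S P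
  | _, _, exL _ _ p, B, D, S, P => hasOrL _ _ p B D S P
  | _, _, allR _ _ p, B, D, S, P => hasOrL _ _ p B D S P

/-- Every formula in `Δ` is atomic or ⊥. -/
def neutralM (Δ : Multiset Fm) : Prop := ∀ F ∈ Δ, F.neutral

/-- A uniform proof: an I-proof in which any sequent whose succedent contains
a non-atomic formula occurs only as the lower sequent of an inference rule
that introduces the top-level logical symbol of that formula. -/
def isUniform : ∀ (Γ Δ : Multiset Fm), CProof Γ Δ → Prop
  | _, _, @ax _ Δ _ => Multiset.card Δ = 1
  | _, _, @contrL _ _ Δ p => Multiset.card Δ = 1 ∧ neutralM Δ ∧ isUniform _ _ p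
  | _, _, @contrR B _ Δ p =>
      Multiset.card (B ::ₘ Δ) = 1 ∧ neutralM (B ::ₘ Δ) ∧ isUniform _ _ p
  | _, _, @botR D _ Δ p =>
      Multiset.card (D ::ₘ Δ) = 1 ∧ neutralM (D ::ₘ Δ) ∧ isUniform _ _ p
  | _, _, @andL _ _ _ Δ p => Multiset.card Δ = 1 ∧ neutralM Δ ∧ isUniform _ _ p
  | _, _, @andR B D _ Δ p q =>
      Multiset.card ((B.conj D) ::ₘ Δ) = 1 ∧ isUniform _ _ p ∧ isUniform _ _ q
  | _, _, @orL _ _ _ Δ p q =>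
      Multiset.card Δ = 1 ∧ neutralM Δ ∧ isUniform _ _ p ∧ isUniform _ _ q
  | _, _, @orR1 B D _ Δ p => Multiset.card ((B.disj D) ::ₘ Δ) = 1 ∧ isUniform _ _ p
  | _, _, @orR2 B D _ Δ p => Multiset.card ((B.disj D) ::ₘ Δ) = 1 ∧ isUniform _ _ p
  | _, _, @impL _ _ _ Δ Θ p q =>
      Multiset.card (Δ + Θ) = 1 ∧ neutralM (Δ + Θ) ∧ isUniform _ _ p ∧ isUniform _ _ q
  | _, _, @impR B D _ Δ p => Multiset.card ((B.imp D) ::ₘ Δ) = 1 ∧ isUniform _ _ p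
  | _, _, @allL _ _ Δ _ p => Multiset.card Δ = 1 ∧ neutralM Δ ∧ isUniform _ _ p
  | _, _, @exR B _ Δ _ p => Multiset.card ((Fm.ex B) ::ₘ Δ) = 1 ∧ isUniform _ _ p
  | _, _, @exL _ _ Δ _ _ p => Multiset.card Δ = 1 ∧ neutralM Δ ∧ isUniform _ _ p
  | _, _, @allR B _ Δ _ _ p => Multiset.card ((Fm.all B) ::ₘ Δ) = 1 ∧ isUniform _ _ p

end CProof

/-- Uniform provability: `Γ ⊢_O F`. -/
def UProv (Γ : Multiset Fm) (F : Fm) : Prop :=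
  ∃ p : CProof Γ ({F} : Multiset Fm), p.isUniform

/-- The ordering ⪰ measuring the strength of formulas as assumptions. -/
inductive Fm.ge : Fm → Fm → Prop
  | refl (F : Fm) : Fm.ge F F
  | imp {F A B : Fm} : Fm.ge F B → Fm.ge F (Fm.imp A B)
  | disjl {F A B : Fm} : Fm.ge F A → Fm.ge F (Fm.disj A B)
  | disjr {F A B : Fm} : Fm.ge F B → Fm.ge F (Fm.disj A B)
  | ex {F P : Fm} (c : ℕ) : Fm.ge F (P.inst (Tm.const c)) → Fm.ge F (Fm.ex P)

/-- `MsGe Γ₁ Γ₂`: there is an injective map κ from `Γ₂` into `Γ₁` with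
`κ(F) ⪰ F` for every `F ∈ Γ₂`. -/
def MsGe (Γ₁ Γ₂ : Multiset Fm) : Prop :=
  ∃ Γ' ≤ Γ₁, Multiset.Rel Fm.ge Γ' Γ₂

mutual
  /-- G-formulas: G ::= ⊤ | ⊥ | A | G∧G | G∨G | D⊃G | ∃x G. -/
  inductive GFm : Fm → Prop
    | top : GFm Fm.top
    | bot : GFm Fm.bot
    | atom {p : ℕ} {ts : List Tm} : GFm (Fm.atom p ts)
    | conj {a b : Fm} : GFm a → GFm b → GFm (Fm.conj a b)
    | disj {a b : Fm} : GFm a → GFm b → GFm (Fm.disj a b)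
    | imp {a b : Fm} : DFm a → GFm b → GFm (Fm.imp a b)
    | ex {a : Fm} : GFm a → GFm (Fm.ex a)

  /-- D-formulas: D ::= ⊤ | ⊥ | A | G⊃D | D∧D | D∨D | ∃x D | ∀x D. -/
  inductive DFm : Fm → Prop
    | top : DFm Fm.top
    | bot : DFm Fm.bot
    | atom {p : ℕ} {ts : List Tm} : DFm (Fm.atom p ts)
    | imp {a b : Fm} : GFm a → DFm b → DFm (Fm.imp a b)
    | conj {a b : Fm} : DFm a → DFm b → DFm (Fm.conj a b)
    | disj {a b : Fm} : DFm a → DFm b → DFm (Fm.disj a b)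
    | ex {a : Fm} : DFm a → DFm (Fm.ex a)
    | all {a : Fm} : DFm a → DFm (Fm.all a)
end
/-- I_G-proofs: derivations in the intuitionistic sequent calculus (single
succedent formula) augmented with the derived rules ∨-L_G and res_G, in which
the eigenvariable proviso on ∃-L and ∀-R also disallows constants in `G`. -/
inductive IGProof (G : Fm) : Multiset Fm → Fm → Type
  | ax {Γ : Multiset Fm} {F : Fm} (h : AxSeq Γ ({F} : Multiset Fm)) : IGProof G Γ F
  | contrL {B : Fm} {Γ : Multiset Fm} {F : Fm} (p : IGProof G (B ::ₘ B ::ₘ Γ) F) :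
      IGProof G (B ::ₘ Γ) F
  | botR {Γ : Multiset Fm} {F : Fm} (p : IGProof G Γ Fm.bot) : IGProof G Γ F
  | andL {B D : Fm} {Γ : Multiset Fm} {F : Fm}
      (p : IGProof G (B ::ₘ D ::ₘ (B.conj D) ::ₘ Γ) F) : IGProof G ((B.conj D) ::ₘ Γ) F
  | andR {B D : Fm} {Γ : Multiset Fm} (p : IGProof G Γ B) (q : IGProof G Γ D) :
      IGProof G Γ (B.conj D)
  | orL {B D : Fm} {Γ : Multiset Fm} {F : Fm} (p : IGProof G (B ::ₘ Γ) F)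
      (q : IGProof G (D ::ₘ Γ) F) : IGProof G ((B.disj D) ::ₘ Γ) F
  | orR1 {B D : Fm} {Γ : Multiset Fm} (p : IGProof G Γ B) : IGProof G Γ (B.disj D)
  | orR2 {B D : Fm} {Γ : Multiset Fm} (p : IGProof G Γ D) : IGProof G Γ (B.disj D)
  | impL {B D : Fm} {Γ : Multiset Fm} {F : Fm} (p : IGProof G ((B.imp D) ::ₘ Γ) B)
      (q : IGProof G (D ::ₘ Γ) F) : IGProof G ((B.imp D) ::ₘ Γ) F
  | impR {B D : Fm} {Γ : Multiset Fm} (p : IGProof G (B ::ₘ Γ) D) : IGProof G Γ (B.imp D)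
  | allL {B : Fm} {Γ : Multiset Fm} {F : Fm} (t : Tm)
      (p : IGProof G ((B.inst t) ::ₘ (Fm.all B) ::ₘ Γ) F) : IGProof G ((Fm.all B) ::ₘ Γ) F
  | exR {B : Fm} {Γ : Multiset Fm} (t : Tm) (p : IGProof G Γ (B.inst t)) :
      IGProof G Γ (Fm.ex B)
  | exL {B : Fm} {Γ : Multiset Fm} {F : Fm} (c : ℕ)
      (hc : FreshSeq c ((Fm.ex B) ::ₘ Γ) ({F} : Multiset Fm)) (hG : ¬ G.constIn c)
      (p : IGProof G ((B.inst (Tm.const c)) ::ₘ Γ) F) : IGProof G ((Fm.ex B) ::ₘ Γ) F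
  | allR {B : Fm} {Γ : Multiset Fm} (c : ℕ)
      (hc : FreshSeq c Γ ({Fm.all B} : Multiset Fm)) (hG : ¬ G.constIn c)
      (p : IGProof G Γ (B.inst (Tm.const c))) : IGProof G Γ (Fm.all B)
  | orLG {B D : Fm} {Γ : Multiset Fm} {F : Fm} (p : IGProof G (B ::ₘ Γ) F)
      (q : IGProof G (D ::ₘ Γ) G) : IGProof G ((B.disj D) ::ₘ Γ) F
  | resG {Γ : Multiset Fm} {F : Fm} (p : IGProof G Γ G) : IGProof G Γ F

namespace IGProof

/-- The number of occurrences of the ∨-L rule in an I_G-proof. -/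
def orLCount : ∀ (G : Fm) (Γ : Multiset Fm) (F : Fm), IGProof G Γ F → ℕ
  | _, _, _, ax _ => 0
  | _, _, _, contrL p => orLCount _ _ _ p
  | _, _, _, botR p => orLCount _ _ _ p
  | _, _, _, andL p => orLCount _ _ _ p
  | _, _, _, andR p q => orLCount _ _ _ p + orLCount _ _ _ q
  | _, _, _, orL p q => orLCount _ _ _ p + orLCount _ _ _ q + 1
  | _, _, _, orR1 p => orLCount _ _ _ p
  | _, _, _, orR2 p => orLCount _ _ _ p
  | _, _, _, impL p q => orLCount _ _ _ p + orLCount _ _ _ q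
  | _, _, _, impR p => orLCount _ _ _ p
  | _, _, _, allL _ p => orLCount _ _ _ p
  | _, _, _, exR _ p => orLCount _ _ _ p
  | _, _, _, exL _ _ _ p => orLCount _ _ _ p
  | _, _, _, allR _ _ _ p => orLCount _ _ _ p
  | _, _, _, orLG p q => orLCount _ _ _ p + orLCount _ _ _ q
  | _, _, _, resG p => orLCount _ _ _ p

/-- The height of an I_G-proof: the length of its longest branch. -/
def height : ∀ (G : Fm) (Γ : Multiset Fm) (F : Fm), IGProof G Γ F → ℕ
  | _, _, _, ax _ => 1
  | _, _, _, contrL p => height _ _ _ p + 1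
  | _, _, _, botR p => height _ _ _ p + 1
  | _, _, _, andL p => height _ _ _ p + 1
  | _, _, _, andR p q => max (height _ _ _ p) (height _ _ _ q) + 1
  | _, _, _, orL p q => max (height _ _ _ p) (height _ _ _ q) + 1
  | _, _, _, orR1 p => height _ _ _ p + 1
  | _, _, _, orR2 p => height _ _ _ p + 1
  | _, _, _, impL p q => max (height _ _ _ p) (height _ _ _ q) + 1
  | _, _, _, impR p => height _ _ _ p + 1
  | _, _, _, allL _ p => height _ _ _ p + 1
  | _, _, _, exR _ p => height _ _ _ p + 1
  | _, _, _, exL _ _ _ p => height _ _ _ p + 1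
  | _, _, _, allR _ _ _ p => height _ _ _ p + 1
  | _, _, _, orLG p q => max (height _ _ _ p) (height _ _ _ q) + 1
  | _, _, _, resG p => height _ _ _ p + 1

/-- The number of sequents appearing in an I_G-proof. -/
def size : ∀ (G : Fm) (Γ : Multiset Fm) (F : Fm), IGProof G Γ F → ℕ
  | _, _, _, ax _ => 1
  | _, _, _, contrL p => size _ _ _ p + 1
  | _, _, _, botR p => size _ _ _ p + 1
  | _, _, _, andL p => size _ _ _ p + 1
  | _, _, _, andR p q => size _ _ _ p + size _ _ _ q + 1
  | _, _, _, orL p q => size _ _ _ p + size _ _ _ q + 1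
  | _, _, _, orR1 p => size _ _ _ p + 1
  | _, _, _, orR2 p => size _ _ _ p + 1
  | _, _, _, impL p q => size _ _ _ p + size _ _ _ q + 1
  | _, _, _, impR p => size _ _ _ p + 1
  | _, _, _, allL _ p => size _ _ _ p + 1
  | _, _, _, exR _ p => size _ _ _ p + 1
  | _, _, _, exL _ _ _ p => size _ _ _ p + 1
  | _, _, _, allR _ _ _ p => size _ _ _ p + 1
  | _, _, _, orLG p q => size _ _ _ p + size _ _ _ q + 1
  | _, _, _, resG p => size _ _ _ p + 1

/-- O_G-proofs: I_G-proofs containing no occurrence of the ∨-L rule, in which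
any sequent whose succedent contains a non-atomic formula occurs only as the
lower sequent of a rule introducing the top-level symbol of that formula. -/
def isOG : ∀ (G : Fm) (Γ : Multiset Fm) (F : Fm), IGProof G Γ F → Prop
  | _, _, _, ax _ => True
  | _, _, _, @contrL _ _ _ F p => F.neutral ∧ isOG _ _ _ p
  | _, _, _, @botR _ _ F p => F.neutral ∧ isOG _ _ _ p
  | _, _, _, @andL _ _ _ _ F p => F.neutral ∧ isOG _ _ _ p
  | _, _, _, andR p q => isOG _ _ _ p ∧ isOG _ _ _ q
  | _, _, _, orL _ _ => False
  | _, _, _, orR1 p => isOG _ _ _ p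
  | _, _, _, orR2 p => isOG _ _ _ p
  | _, _, _, @impL _ _ _ _ F p q => F.neutral ∧ isOG _ _ _ p ∧ isOG _ _ _ q
  | _, _, _, impR p => isOG _ _ _ p
  | _, _, _, @allL _ _ _ F _ p => F.neutral ∧ isOG _ _ _ p
  | _, _, _, exR _ p => isOG _ _ _ p
  | _, _, _, @exL _ _ _ F _ _ _ p => F.neutral ∧ isOG _ _ _ p
  | _, _, _, allR _ _ _ p => isOG _ _ _ p
  | _, _, _, @orLG _ _ _ _ F p q => F.neutral ∧ isOG _ _ _ p ∧ isOG _ _ _ q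
  | _, _, _, @resG _ _ F p => F.neutral ∧ isOG _ _ _ p

/-- `hasOrL p B D S F` holds when an ∨-L rule with upper sequents `B,S → F`
and `D,S → F` and lower sequent `B∨D,S → F` occurs in the I_G-proof `p`. -/
def hasOrL : ∀ (G : Fm) (Γ : Multiset Fm) (W : Fm), IGProof G Γ W →
    Fm → Fm → Multiset Fm → Fm → Prop
  | _, _, _, ax _, _, _, _, _ => False
  | _, _, _, contrL p, B, D, S, F => hasOrL _ _ _ p B D S F
  | _, _, _, botR p, B, D, S, F => hasOrL _ _ _ p B D S F
  | _, _, _, andL p, B, D, S, F => hasOrL _ _ _ p B D S F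
  | _, _, _, andR p q, B, D, S, F => hasOrL _ _ _ p B D S F ∨ hasOrL _ _ _ q B D S F
  | _, _, _, @orL _ B' D' Γ' F' p q, B, D, S, F =>
      (B' = B ∧ D' = D ∧ Γ' = S ∧ F' = F) ∨ hasOrL _ _ _ p B D S F ∨ hasOrL _ _ _ q B D S F
  | _, _, _, orR1 p, B, D, S, F => hasOrL _ _ _ p B D S F
  | _, _, _, orR2 p, B, D, S, F => hasOrL _ _ _ p B D S F
  | _, _, _, impL p q, B, D, S, F => hasOrL _ _ _ p B D S F ∨ hasOrL _ _ _ q B D S F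
  | _, _, _, impR p, B, D, S, F => hasOrL _ _ _ p B D S F
  | _, _, _, allL _ p, B, D, S, F => hasOrL _ _ _ p B D S F
  | _, _, _, exR _ p, B, D, S, F => hasOrL _ _ _ p B D S F
  | _, _, _, exL _ _ _ p, B, D, S, F => hasOrL _ _ _ p B D S F
  | _, _, _, allR _ _ _ p, B, D, S, F => hasOrL _ _ _ p B D S F
  | _, _, _, orLG p q, B, D, S, F => hasOrL _ _ _ p B D S F ∨ hasOrL _ _ _ q B D S F
  | _, _, _, resG p, B, D, S, F => hasOrL _ _ _ p B D S F

end IGProof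

/-- In the simplified syntax, `A` ranges over atomic formulas together with
⊤ and ⊥. -/
def AtFm (F : Fm) : Prop := F.isAtom ∨ F = Fm.top ∨ F = Fm.bot

/-- `disjs A [B₁,…,Bₙ]` is the disjunction `A ∨ B₁ ∨ … ∨ Bₙ`. -/
def disjs (A : Fm) : List Fm → Fm
  | [] => A
  | B :: l => Fm.disj A (disjs B l)

mutual
  /-- Goals in the simplified syntax: G ::= A | G∧G | G∨G | D⊃G | ∃x G. -/
  inductive Goal : Fm → Prop
    | atm {A : Fm} : AtFm A → Goal A
    | conj {a b : Fm} : Goal a → Goal b → Goal (Fm.conj a b)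
    | disj {a b : Fm} : Goal a → Goal b → Goal (Fm.disj a b)
    | imp {a b : Fm} : PCl a → Goal b → Goal (Fm.imp a b)
    | ex {a : Fm} : Goal a → Goal (Fm.ex a)

  /-- Program clauses in the simplified syntax:
  D ::= (A∨…∨A) | G⊃(A∨…∨A) | ∀x D. -/
  inductive PCl : Fm → Prop
    | head {A : Fm} {l : List Fm} : AtFm A → (∀ B ∈ l, AtFm B) → PCl (disjs A l)
    | impHead {g A : Fm} {l : List Fm} : Goal g → AtFm A → (∀ B ∈ l, AtFm B) →
        PCl (Fm.imp g (disjs A l))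
    | all {d : Fm} : PCl d → PCl (Fm.all d)
end

/-- The instances `[D]` of a program clause `D`, as pairs whose first
component is `∅` (`none`) or `{G}` (`some G`) and whose second component is
the collection of head atoms. -/
inductive ClInst : Fm → Option Fm → Multiset Fm → Prop
  | head {A : Fm} {l : List Fm} : AtFm A → (∀ B ∈ l, AtFm B) →
      ClInst (disjs A l) none (A ::ₘ (l : Multiset Fm))
  | impHead {g A : Fm} {l : List Fm} : Goal g → AtFm A → (∀ B ∈ l, AtFm B) →
      ClInst (Fm.imp g (disjs A l)) (some g) (A ::ₘ (l : Multiset Fm))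
  | all {d : Fm} {o : Option Fm} {m : Multiset Fm} (t : Tm) :
      ClInst (d.inst t) o m → ClInst (Fm.all d) o m

/-- `[Γ]`: the instances of the clauses in `Γ`. -/
def GammaInst (Γ : Multiset Fm) (o : Option Fm) (m : Multiset Fm) : Prop :=
  ∃ D ∈ Γ, ClInst D o m

/-- The reduced proof system relative to the goal `G`: axioms `Δ → ⊤`, the
rules RESTART, ATOMIC and BACKCHAIN relativized to `G`, and ∨-R, ∧-R, ⊃-R
and ∃-R. -/
inductive RP (G : Fm) : Multiset Fm → Fm → Prop
  | topAx {Γ : Multiset Fm} : RP G Γ Fm.top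
  | restart {Γ : Multiset Fm} {C : Fm} (hC : C.isAtom ∨ C = Fm.bot) (p : RP G Γ G) :
      RP G Γ C
  | atomic {Γ : Multiset Fm} {C : Fm} {m : Multiset Fm} (hC : C.isAtom ∨ C = Fm.bot)
      (h : GammaInst Γ none (C ::ₘ m) ∨ GammaInst Γ none (Fm.bot ::ₘ m))
      (ps : ∀ A ∈ m, RP G (A ::ₘ Γ) G) : RP G Γ C
  | backchain {Γ : Multiset Fm} {C G' : Fm} {m : Multiset Fm}
      (hC : C.isAtom ∨ C = Fm.bot)
      (h : GammaInst Γ (some G') (C ::ₘ m) ∨ GammaInst Γ (some G') (Fm.bot ::ₘ m))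
      (p : RP G Γ G') (ps : ∀ A ∈ m, RP G (A ::ₘ Γ) G) : RP G Γ C
  | orR1 {Γ : Multiset Fm} {B D : Fm} (p : RP G Γ B) : RP G Γ (B.disj D)
  | orR2 {Γ : Multiset Fm} {B D : Fm} (p : RP G Γ D) : RP G Γ (B.disj D)
  | andR {Γ : Multiset Fm} {B D : Fm} (p : RP G Γ B) (q : RP G Γ D) : RP G Γ (B.conj D)
  | impR {Γ : Multiset Fm} {B D : Fm} (p : RP G (B ::ₘ Γ) D) : RP G Γ (B.imp D)
  | exR {Γ : Multiset Fm} {B : Fm} (t : Tm) (p : RP G Γ (B.inst t)) : RP G Γ (Fm.ex B)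


/-! ### Auxiliary development for Statement 12 -/

deriving instance DecidableEq for Tm
deriving instance DecidableEq for Fm


namespace Tm

/-- Finset of constants occurring in a term. -/
def consts : Tm → Finset ℕ
  | var _ => ∅
  | const c => {c}

theorem constIn_iff_mem {c : ℕ} : ∀ {t : Tm}, t.constIn c ↔ c ∈ t.consts
  | var _ => by simp [constIn, consts]
  | const d => by simp [constIn, consts, eq_comm]

/-- Renaming of constants in a term. -/
def ren (ρ : ℕ → ℕ) : Tm → Tm
  | var n => var n
  | const c => const (ρ c)

theorem ren_subst (ρ : ℕ → ℕ) (k : ℕ) (u : Tm) :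
    ∀ t : Tm, (subst k u t).ren ρ = subst k (u.ren ρ) (t.ren ρ)
  | var n => by by_cases h : n = k <;> simp [subst, ren, h]
  | const c => by simp [subst, ren]

theorem ren_congr {ρ ρ' : ℕ → ℕ} : ∀ {t : Tm}, (∀ d ∈ t.consts, ρ d = ρ' d) →
    t.ren ρ = t.ren ρ'
  | var _, _ => rfl
  | const c, h => by simp [ren, h c (by simp [consts])]

theorem ren_id : ∀ t : Tm, t.ren id = t
  | var _ => rfl
  | const _ => rfl

theorem mem_consts_ren {ρ : ℕ → ℕ} {c' : ℕ} :
    ∀ {t : Tm}, c' ∈ (t.ren ρ).consts → ∃ d ∈ t.consts, ρ d = c'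
  | var _, h => by simp [ren, consts] at h
  | const c, h => by
      simp [ren, consts] at h
      exact ⟨c, by simp [consts], h.symm⟩

end Tm

namespace Fm

/-- Finset of constants occurring in a formula. -/
def consts : Fm → Finset ℕ
  | top => ∅
  | bot => ∅
  | atom _ ts => ts.foldr (fun t s => t.consts ∪ s) ∅
  | conj a b => consts a ∪ consts b
  | disj a b => consts a ∪ consts b
  | imp a b => consts a ∪ consts b
  | ex a => consts a
  | all a => consts a

theorem mem_foldr_consts {c : ℕ} : ∀ {ts : List Tm},
    c ∈ ts.foldr (fun t s => t.consts ∪ s) ∅ ↔ ∃ t ∈ ts, c ∈ t.consts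
  | [] => by simp
  | t :: ts => by simp [mem_foldr_consts (ts := ts)]

theorem constIn_iff_mem {c : ℕ} : ∀ {F : Fm}, F.constIn c ↔ c ∈ F.consts
  | top => by simp [constIn, consts]
  | bot => by simp [constIn, consts]
  | atom p ts => by
      simp only [constIn, consts, mem_foldr_consts]
      exact exists_congr fun t => and_congr_right fun _ => Tm.constIn_iff_mem
  | conj a b => by
      simp [constIn, consts, constIn_iff_mem (F := a), constIn_iff_mem (F := b)]
  | disj a b => by
      simp [constIn, consts, constIn_iff_mem (F := a), constIn_iff_mem (F := b)]
  | imp a b => by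
      simp [constIn, consts, constIn_iff_mem (F := a), constIn_iff_mem (F := b)]
  | ex a => by simp [constIn, consts, constIn_iff_mem (F := a)]
  | all a => by simp [constIn, consts, constIn_iff_mem (F := a)]

/-- Renaming of constants in a formula. -/
def ren (ρ : ℕ → ℕ) : Fm → Fm
  | top => top
  | bot => bot
  | atom p ts => atom p (ts.map (Tm.ren ρ))
  | conj a b => conj (ren ρ a) (ren ρ b)
  | disj a b => disj (ren ρ a) (ren ρ b)
  | imp a b => imp (ren ρ a) (ren ρ b)
  | ex a => ex (ren ρ a)
  | all a => all (ren ρ a)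

theorem ren_subst (ρ : ℕ → ℕ) : ∀ (k : ℕ) (u : Tm) (F : Fm),
    (subst k u F).ren ρ = subst k (u.ren ρ) (F.ren ρ)
  | _, _, top => rfl
  | _, _, bot => rfl
  | k, u, atom p ts => by
      simp [subst, ren, List.map_map]
      exact fun t _ => Tm.ren_subst ρ k u t
  | k, u, conj a b => by simp [subst, ren, ren_subst ρ k u a, ren_subst ρ k u b]
  | k, u, disj a b => by simp [subst, ren, ren_subst ρ k u a, ren_subst ρ k u b]
  | k, u, imp a b => by simp [subst, ren, ren_subst ρ k u a, ren_subst ρ k u b]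
  | k, u, ex a => by simp [subst, ren, ren_subst ρ (k+1) u a]
  | k, u, all a => by simp [subst, ren, ren_subst ρ (k+1) u a]

theorem ren_inst (ρ : ℕ → ℕ) (u : Tm) (F : Fm) :
    (F.inst u).ren ρ = (F.ren ρ).inst (u.ren ρ) := ren_subst ρ 0 u F

theorem ren_congr {ρ ρ' : ℕ → ℕ} : ∀ {F : Fm}, (∀ d ∈ F.consts, ρ d = ρ' d) →
    F.ren ρ = F.ren ρ'
  | top, _ => rfl
  | bot, _ => rfl
  | atom p ts, h => by
      simp only [ren, atom.injEq, true_and]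
      refine List.map_congr_left fun t ht => Tm.ren_congr fun d hd => ?_
      exact h d (by simp only [consts, mem_foldr_consts]; exact ⟨t, ht, hd⟩)
  | conj a b, h => by
      simp only [consts, Finset.mem_union] at h
      simp [ren, ren_congr (fun d hd => h d (Or.inl hd)),
        ren_congr (fun d hd => h d (Or.inr hd))]
  | disj a b, h => by
      simp only [consts, Finset.mem_union] at h
      simp [ren, ren_congr (fun d hd => h d (Or.inl hd)),
        ren_congr (fun d hd => h d (Or.inr hd))]
  | imp a b, h => by
      simp only [consts, Finset.mem_union] at h
      simp [ren, ren_congr (fun d hd => h d (Or.inl hd)),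
        ren_congr (fun d hd => h d (Or.inr hd))]
  | ex a, h => by simp [ren, ren_congr (F := a) h]
  | all a, h => by simp [ren, ren_congr (F := a) h]

theorem ren_id : ∀ F : Fm, F.ren id = F
  | top => rfl
  | bot => rfl
  | atom p ts => by simp [ren, List.map_congr_left fun t _ => Tm.ren_id t]
  | conj a b => by simp [ren, ren_id a, ren_id b]
  | disj a b => by simp [ren, ren_id a, ren_id b]
  | imp a b => by simp [ren, ren_id a, ren_id b]
  | ex a => by simp [ren, ren_id a]
  | all a => by simp [ren, ren_id a]

theorem ren_eq_self {ρ : ℕ → ℕ} {F : Fm} (h : ∀ d ∈ F.consts, ρ d = d) :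
    F.ren ρ = F := by
  have := ren_congr (ρ := ρ) (ρ' := id) (F := F) h
  rwa [ren_id F] at this

theorem mem_consts_ren {ρ : ℕ → ℕ} {c' : ℕ} :
    ∀ {F : Fm}, c' ∈ (F.ren ρ).consts → ∃ d ∈ F.consts, ρ d = c'
  | top, h => by simp [ren, consts] at h
  | bot, h => by simp [ren, consts] at h
  | atom p ts, h => by
      simp only [ren, consts, mem_foldr_consts, List.mem_map] at h
      obtain ⟨_, ⟨t, ht, rfl⟩, hc⟩ := h
      obtain ⟨d, hd, hdc⟩ := Tm.mem_consts_ren hc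
      exact ⟨d, by simp only [consts, mem_foldr_consts]; exact ⟨t, ht, hd⟩, hdc⟩
  | conj a b, h => by
      simp only [ren, consts, Finset.mem_union] at h ⊢
      rcases h with h | h
      · obtain ⟨d, hd, hc⟩ := mem_consts_ren h; exact ⟨d, Or.inl hd, hc⟩
      · obtain ⟨d, hd, hc⟩ := mem_consts_ren h; exact ⟨d, Or.inr hd, hc⟩
  | disj a b, h => by
      simp only [ren, consts, Finset.mem_union] at h ⊢
      rcases h with h | h
      · obtain ⟨d, hd, hc⟩ := mem_consts_ren h; exact ⟨d, Or.inl hd, hc⟩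
      · obtain ⟨d, hd, hc⟩ := mem_consts_ren h; exact ⟨d, Or.inr hd, hc⟩
  | imp a b, h => by
      simp only [ren, consts, Finset.mem_union] at h ⊢
      rcases h with h | h
      · obtain ⟨d, hd, hc⟩ := mem_consts_ren h; exact ⟨d, Or.inl hd, hc⟩
      · obtain ⟨d, hd, hc⟩ := mem_consts_ren h; exact ⟨d, Or.inr hd, hc⟩
  | ex a, h => mem_consts_ren (F := a) h
  | all a, h => mem_consts_ren (F := a) h

/-- Renaming preserves being an atom-shape. -/
theorem isAtom_ren {ρ : ℕ → ℕ} : ∀ {F : Fm}, F.isAtom → (F.ren ρ).isAtom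
  | atom _ _, _ => trivial

theorem ren_eq_bot_iff {ρ : ℕ → ℕ} : ∀ {F : Fm}, F.ren ρ = bot ↔ F = bot
  | top => by simp [ren]
  | bot => by simp [ren]
  | atom _ _ => by simp [ren]
  | conj _ _ => by simp [ren]
  | disj _ _ => by simp [ren]
  | imp _ _ => by simp [ren]
  | ex _ => by simp [ren]
  | all _ => by simp [ren]

end Fm

/-- The constants of a multiset of formulas. -/
def mconsts (Γ : Multiset Fm) : Finset ℕ := (Γ.map Fm.consts).sup

theorem mem_mconsts_of {Γ : Multiset Fm} {F : Fm} (hF : F ∈ Γ) {c : ℕ}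
    (hc : c ∈ F.consts) : c ∈ mconsts Γ := by
  have h1 : F.consts ∈ Γ.map Fm.consts := Multiset.mem_map_of_mem _ hF
  have h2 : F.consts ≤ (Γ.map Fm.consts).sup := Multiset.le_sup h1
  exact h2 hc

/-- A fresh constant avoiding a given finite set. -/
def freshC (s : Finset ℕ) : ℕ := s.sup id + 1

theorem freshC_not_mem (s : Finset ℕ) : freshC s ∉ s := by
  intro h
  have h2 := Finset.le_sup (f := id) h
  simp only [id, freshC] at h2
  omega


/-! ### D- and G-formulas: closure under substitution -/

theorem subst_DG (k : ℕ) (u : Tm) : ∀ F : Fm,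
    (DFm F → DFm (Fm.subst k u F)) ∧ (GFm F → GFm (Fm.subst k u F)) := by
  intro F
  induction F generalizing k u with
  | top => exact ⟨fun _ => DFm.top, fun _ => GFm.top⟩
  | bot => exact ⟨fun _ => DFm.bot, fun _ => GFm.bot⟩
  | atom p ts => exact ⟨fun _ => DFm.atom, fun _ => GFm.atom⟩
  | conj a b iha ihb =>
      constructor
      · intro h; cases h with
        | conj ha hb => exact DFm.conj ((iha k u).1 ha) ((ihb k u).1 hb)
      · intro h; cases h with
        | conj ha hb => exact GFm.conj ((iha k u).2 ha) ((ihb k u).2 hb)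
  | disj a b iha ihb =>
      constructor
      · intro h; cases h with
        | disj ha hb => exact DFm.disj ((iha k u).1 ha) ((ihb k u).1 hb)
      · intro h; cases h with
        | disj ha hb => exact GFm.disj ((iha k u).2 ha) ((ihb k u).2 hb)
  | imp a b iha ihb =>
      constructor
      · intro h; cases h with
        | imp ha hb => exact DFm.imp ((iha k u).2 ha) ((ihb k u).1 hb)
      · intro h; cases h with
        | imp ha hb => exact GFm.imp ((iha k u).1 ha) ((ihb k u).2 hb)
  | ex a iha =>
      constructor
      · intro h; cases h with
        | ex ha => exact DFm.ex ((iha (k+1) u).1 ha)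
      · intro h; cases h with
        | ex ha => exact GFm.ex ((iha (k+1) u).2 ha)
  | all a iha =>
      constructor
      · intro h; cases h with
        | all ha => exact DFm.all ((iha (k+1) u).1 ha)
      · intro h; exact absurd h (by intro hh; cases hh)

theorem DFm.inst {F : Fm} (h : DFm F) (u : Tm) : DFm (F.inst u) :=
  (subst_DG 0 u F).1 h

theorem GFm.inst {F : Fm} (h : GFm F) (u : Tm) : GFm (F.inst u) :=
  (subst_DG 0 u F).2 h

/-! ### The cover relation -/

/-- `Cov S X`: the multiset `S` of formulas is at least as strong as the
single formula `X` (jointly). -/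
inductive Cov : Multiset Fm → Fm → Prop
  | refl (F : Fm) : Cov {F} F
  | imp {S : Multiset Fm} {A B : Fm} : Cov S B → Cov S (Fm.imp A B)
  | disjl {S : Multiset Fm} {A B : Fm} : Cov S A → Cov S (Fm.disj A B)
  | disjr {S : Multiset Fm} {A B : Fm} : Cov S B → Cov S (Fm.disj A B)
  | exc {S : Multiset Fm} {B : Fm} (c : ℕ) :
      Cov S (B.inst (Tm.const c)) → Cov S (Fm.ex B)
  | conj {S₁ S₂ : Multiset Fm} {A B : Fm} :
      Cov S₁ A → Cov S₂ B → Cov (S₁ + S₂) (Fm.conj A B)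

/-- `MsCov Γ₁ Γ₂`: the multiset `Γ₁` covers the多 multiset `Γ₂` — there are
pairwise disjoint pieces of `Γ₁`, one covering each element of `Γ₂`. -/
def MsCov (Γ₁ Γ₂ : Multiset Fm) : Prop :=
  ∃ m : Multiset (Multiset Fm × Fm), m.map Prod.snd = Γ₂ ∧
    (m.map Prod.fst).sum ≤ Γ₁ ∧ ∀ x ∈ m, Cov x.1 x.2

theorem msCov_refl (Γ : Multiset Fm) : MsCov Γ Γ := by
  refine ⟨Γ.map fun F => ({F}, F), ?_, ?_, ?_⟩
  · simp [Multiset.map_map]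
  · simp only [Multiset.map_map, Function.comp]
    rw [Multiset.sum_map_singleton]
  · intro x hx
    simp only [Multiset.mem_map] at hx
    obtain ⟨F, _, rfl⟩ := hx
    exact Cov.refl F

theorem msCov_mono_left {Γ₁ Γ₁' Γ₂ : Multiset Fm} (h : MsCov Γ₁ Γ₂)
    (hle : Γ₁ ≤ Γ₁') : MsCov Γ₁' Γ₂ := by
  obtain ⟨m, h1, h2, h3⟩ := h
  exact ⟨m, h1, le_trans h2 hle, h3⟩

theorem msCov_cons {S Γ₁ Γ₂ : Multiset Fm} {F : Fm} (hc : Cov S F)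
    (h : MsCov Γ₁ Γ₂) : MsCov (S + Γ₁) (F ::ₘ Γ₂) := by
  obtain ⟨m, h1, h2, h3⟩ := h
  refine ⟨(S, F) ::ₘ m, by simp [h1], ?_, ?_⟩
  · simp only [Multiset.map_cons, Multiset.sum_cons]
    exact add_le_add_right h2 S
  · intro x hx
    rcases Multiset.mem_cons.1 hx with rfl | hx
    · exact hc
    · exact h3 x hx

theorem msCov_cons_refl {Γ₁ Γ₂ : Multiset Fm} (F : Fm) (h : MsCov Γ₁ Γ₂) :
    MsCov (F ::ₘ Γ₁) (F ::ₘ Γ₂) := by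
  have := msCov_cons (Cov.refl F) h
  rwa [Multiset.singleton_add] at this

theorem msCov_weak_left {Γ₁ Γ₂ : Multiset Fm} (F : Fm) (h : MsCov Γ₁ Γ₂) :
    MsCov (F ::ₘ Γ₁) Γ₂ :=
  msCov_mono_left h (Multiset.le_cons_self Γ₁ F)

theorem msCov_weak_left' {Γ₁ Γ₂ : Multiset Fm} (S : Multiset Fm)
    (h : MsCov Γ₁ Γ₂) : MsCov (S + Γ₁) Γ₂ :=
  msCov_mono_left h (by simp)

/-- Splitting a multiset along a decomposition of its image. -/
theorem map_eq_add_split {α β : Type} {f : α → β} :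
    ∀ {S : Multiset β} {m : Multiset α} {R : Multiset β}, m.map f = S + R →
      ∃ mS mR : Multiset α, m = mS + mR ∧ mS.map f = S ∧ mR.map f = R := by
  intro S
  induction S using Multiset.induction with
  | empty => exact fun {m R} h => ⟨0, m, by simp, by simp, by simpa using h⟩
  | cons a S ih =>
      intro m R h
      have ha : a ∈ m.map f := by rw [h]; simp
      obtain ⟨b, hb, hfb⟩ := Multiset.mem_map.1 ha
      obtain ⟨m₀, rfl⟩ := Multiset.exists_cons_of_mem hb
      have h2 : f b ::ₘ m₀.map f = a ::ₘ (S + R) := by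
        simpa [Multiset.cons_add] using h
      rw [hfb] at h2
      have h3 : m₀.map f = S + R := (Multiset.cons_inj_right a).1 h2
      obtain ⟨mS, mR, rfl, hS, hR⟩ := ih h3
      exact ⟨b ::ₘ mS, mR, by simp [Multiset.cons_add], by simp [hS, hfb], hR⟩

theorem exists_le_map {α β : Type} {f : α → β} {m : Multiset α} {S : Multiset β}
    (h : S ≤ m.map f) : ∃ m' ≤ m, m'.map f = S := by
  obtain ⟨R, hR⟩ := Multiset.le_iff_exists_add.1 h
  obtain ⟨mS, mR, hmm, hS, _⟩ := map_eq_add_split (S := S) (R := R) hR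
  exact ⟨mS, by rw [hmm]; simp, hS⟩

theorem msCov_mono_right {Γ₁ Γ₂ Γ₂' : Multiset Fm} (h : MsCov Γ₁ Γ₂)
    (hle : Γ₂' ≤ Γ₂) : MsCov Γ₁ Γ₂' := by
  obtain ⟨m, h1, h2, h3⟩ := h
  obtain ⟨m', hm'le, hm'⟩ := exists_le_map (f := Prod.snd) (m := m) (S := Γ₂')
    (by rw [h1]; exact hle)
  refine ⟨m', hm', ?_, fun x hx => h3 x (Multiset.subset_of_le hm'le hx)⟩
  calc (m'.map Prod.fst).sum ≤ (m.map Prod.fst).sum := by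
        obtain ⟨u, hu⟩ := Multiset.le_iff_exists_add.1 (Multiset.map_le_map hm'le)
        rw [hu, Multiset.sum_add]; exact Multiset.le_add_right _ _
    _ ≤ Γ₁ := h2

theorem msCov_focus {Γ₁ Γ₂ : Multiset Fm} {F : Fm}
    (h : MsCov Γ₁ (F ::ₘ Γ₂)) :
    ∃ S Γd, Cov S F ∧ MsCov Γd Γ₂ ∧ Γ₁ = S + Γd := by
  obtain ⟨m, h1, h2, h3⟩ := h
  have h1' : m.map Prod.snd = {F} + Γ₂ := by rwa [Multiset.singleton_add]
  obtain ⟨mF, mR, hmm, hS, hR⟩ := map_eq_add_split h1'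
  obtain ⟨x, hx⟩ := Multiset.card_eq_one.1 (by rw [← Multiset.card_map, hS]; simp)
  have hx2 : x.2 = F := by
    have := hS; rw [hx] at this; simpa using this
  have hsum : x.1 + (mR.map Prod.fst).sum ≤ Γ₁ := by
    have : (m.map Prod.fst).sum = x.1 + (mR.map Prod.fst).sum := by
      rw [hmm, hx]; simp
    rwa [this] at h2
  refine ⟨x.1, Γ₁ - x.1, ?_, ?_, ?_⟩
  · have := h3 x (by rw [hmm, hx]; simp)
    rwa [hx2] at this
  · refine ⟨mR, hR, ?_, fun y hy => h3 y (by rw [hmm]; exact Multiset.mem_add.2 (Or.inr hy))⟩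
    exact le_tsub_of_add_le_left hsum
  · have hxle : x.1 ≤ Γ₁ := le_trans (Multiset.le_add_right _ _) hsum
    rw [add_tsub_cancel_of_le hxle]

theorem msCov_mem_atom {Γ₁ Γ₂ : Multiset Fm} {A : Fm} (h : MsCov Γ₁ Γ₂)
    (hA : A ∈ Γ₂) (hat : A = Fm.bot ∨ A.isAtom) : A ∈ Γ₁ := by
  have h' : MsCov Γ₁ (A ::ₘ Γ₂.erase A) := by rwa [Multiset.cons_erase hA]
  obtain ⟨S, Γd, hc, _, rfl⟩ := msCov_focus h'
  have hSA : A ∈ S := by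
    rcases hat with rfl | hat
    · cases hc; simp
    · cases A with
      | atom p ts => cases hc; simp
      | top => exact absurd hat (by simp [Fm.isAtom])
      | bot => exact absurd hat (by simp [Fm.isAtom])
      | conj a b => exact absurd hat (by simp [Fm.isAtom])
      | disj a b => exact absurd hat (by simp [Fm.isAtom])
      | imp a b => exact absurd hat (by simp [Fm.isAtom])
      | ex a => exact absurd hat (by simp [Fm.isAtom])
      | all a => exact absurd hat (by simp [Fm.isAtom])
  exact Multiset.mem_add.2 (Or.inl hSA)

/-- Composition of covers. -/
theorem covCompose {S : Multiset Fm} {X : Fm} (h : Cov S X) :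
    ∀ m : Multiset (Multiset Fm × Fm), m.map Prod.snd = S →
      (∀ x ∈ m, Cov x.1 x.2) → Cov (m.map Prod.fst).sum X := by
  induction h with
  | refl F =>
      intro m hm hcov
      obtain ⟨x, hx⟩ := Multiset.card_eq_one.1 (by rw [← Multiset.card_map, hm]; simp)
      have hx2 : x.2 = F := by rw [hx] at hm; simpa using hm
      have := hcov x (by rw [hx]; simp)
      rw [hx2] at this
      rw [hx]; simpa using this
  | imp _ ih => exact fun m hm hcov => Cov.imp (ih m hm hcov)
  | disjl _ ih => exact fun m hm hcov => Cov.disjl (ih m hm hcov)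
  | disjr _ ih => exact fun m hm hcov => Cov.disjr (ih m hm hcov)
  | exc c _ ih => exact fun m hm hcov => Cov.exc c (ih m hm hcov)
  | conj _ _ ih1 ih2 =>
      intro m hm hcov
      obtain ⟨m1, m2, rfl, hm1, hm2⟩ := map_eq_add_split hm
      have c1 := ih1 m1 hm1 (fun x hx => hcov x (Multiset.mem_add.2 (Or.inl hx)))
      have c2 := ih2 m2 hm2 (fun x hx => hcov x (Multiset.mem_add.2 (Or.inr hx)))
      have := Cov.conj c1 c2
      simpa using this

theorem msCompose :
    ∀ m₁ m' : Multiset (Multiset Fm × Fm), m'.map Prod.snd = (m₁.map Prod.fst).sum →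
      (∀ x ∈ m', Cov x.1 x.2) → (∀ x ∈ m₁, Cov x.1 x.2) →
      ∃ m₃ : Multiset (Multiset Fm × Fm), m₃.map Prod.snd = m₁.map Prod.snd ∧
        (m₃.map Prod.fst).sum = (m'.map Prod.fst).sum ∧ ∀ x ∈ m₃, Cov x.1 x.2 := by
  intro m₁
  induction m₁ using Multiset.induction with
  | empty =>
      intro m' hm' _ _
      simp only [Multiset.map_zero, Multiset.sum_zero, Multiset.map_eq_zero] at hm'
      subst hm'
      exact ⟨0, by simp, by simp, by simp⟩
  | cons x m₁ ih =>
      intro m' hm' hcov' hcov₁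
      have hm'2 : m'.map Prod.snd = x.1 + (m₁.map Prod.fst).sum := by
        simpa using hm'
      obtain ⟨mS, mR, rfl, hmS, hmR⟩ := map_eq_add_split hm'2
      have cX : Cov (mS.map Prod.fst).sum x.2 :=
        covCompose (hcov₁ x (by simp)) mS hmS
          (fun y hy => hcov' y (Multiset.mem_add.2 (Or.inl hy)))
      obtain ⟨m₃, h31, h32, h33⟩ := ih mR hmR
        (fun y hy => hcov' y (Multiset.mem_add.2 (Or.inr hy)))
        (fun y hy => hcov₁ y (Multiset.mem_cons_of_mem hy))
      refine ⟨((mS.map Prod.fst).sum, x.2) ::ₘ m₃, by simp [h31], ?_, ?_⟩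
      · simp only [Multiset.map_cons, Multiset.sum_cons, Multiset.map_add,
          Multiset.sum_add, h32]
      · intro y hy
        rcases Multiset.mem_cons.1 hy with rfl | hy
        · exact cX
        · exact h33 y hy

theorem msCov_trans {Γ₃ Γ₂ Γ₁ : Multiset Fm} (h32 : MsCov Γ₃ Γ₂)
    (h21 : MsCov Γ₂ Γ₁) : MsCov Γ₃ Γ₁ := by
  obtain ⟨m₂, hs₂, hf₂, hc₂⟩ := h32
  obtain ⟨m₁, hs₁, hf₁, hc₁⟩ := h21
  obtain ⟨m₂', hle, hm₂'⟩ := exists_le_map (f := Prod.snd) (m := m₂)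
    (S := (m₁.map Prod.fst).sum) (by rw [hs₂]; exact hf₁)
  obtain ⟨m₃, h31, h32', h33⟩ := msCompose m₁ m₂' hm₂'
    (fun x hx => hc₂ x (Multiset.subset_of_le hle hx)) hc₁
  refine ⟨m₃, by rw [h31, hs₁], ?_, h33⟩
  rw [h32']
  calc (m₂'.map Prod.fst).sum ≤ (m₂.map Prod.fst).sum := by
        obtain ⟨u, hu⟩ := Multiset.le_iff_exists_add.1 (Multiset.map_le_map hle)
        rw [hu, Multiset.sum_add]; exact Multiset.le_add_right _ _
    _ ≤ Γ₃ := hf₂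


/-! ### Provability with no ∨-L occurrences -/

theorem consts_subset_mconsts {Γ : Multiset Fm} {X : Fm} (h : X ∈ Γ) :
    X.consts ⊆ mconsts Γ := fun _ hc => mem_mconsts_of h hc

theorem not_constIn_of_fresh {F : Fm} {s : Finset ℕ} (h : F.consts ⊆ s) :
    ¬ F.constIn (freshC s) := fun hc => freshC_not_mem s (h (Fm.constIn_iff_mem.1 hc))

theorem not_constIn_ren_image {X : Fm} {ρ : ℕ → ℕ} {s : Finset ℕ}
    (hX : X.consts ⊆ s) : ¬ (X.ren ρ).constIn (freshC (s.image ρ)) := by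
  intro hcon
  rw [Fm.constIn_iff_mem] at hcon
  obtain ⟨d, hd, hdc⟩ := Fm.mem_consts_ren hcon
  exact freshC_not_mem _ (hdc ▸ Finset.mem_image_of_mem ρ (hX hd))

theorem AxSeq_map {Γ Δ : Multiset Fm} (h : AxSeq Γ Δ) (ρ : ℕ → ℕ) :
    AxSeq (Γ.map (Fm.ren ρ)) (Δ.map (Fm.ren ρ)) := by
  rcases h with h | ⟨A, hA, h1, h2⟩
  · exact Or.inl (by simpa [Fm.ren] using Multiset.mem_map_of_mem (Fm.ren ρ) h)
  · refine Or.inr ⟨A.ren ρ, ?_, Multiset.mem_map_of_mem _ h1, Multiset.mem_map_of_mem _ h2⟩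
    rcases hA with rfl | hA
    · exact Or.inl rfl
    · exact Or.inr (Fm.isAtom_ren hA)

/-- `Γ ⊢ F` by an I_G-proof with no occurrence of ∨-L. -/
def NIG (G : Fm) (Γ : Multiset Fm) (F : Fm) : Prop :=
  ∃ p : IGProof G Γ F, p.orLCount = 0

theorem NIG_cast {G F : Fm} {Γ Γ' : Multiset Fm} (h : Γ = Γ') :
    NIG G Γ F → NIG G Γ' F := by subst h; exact id

namespace NIG

variable {G : Fm} {Γ : Multiset Fm} {B D F : Fm}

theorem ax (h : AxSeq Γ ({F} : Multiset Fm)) : NIG G Γ F :=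
  ⟨IGProof.ax h, by simp [IGProof.orLCount]⟩

theorem contrL (h : NIG G (B ::ₘ B ::ₘ Γ) F) : NIG G (B ::ₘ Γ) F := by
  obtain ⟨p, hp⟩ := h; exact ⟨IGProof.contrL p, by simpa [IGProof.orLCount] using hp⟩

theorem botR (h : NIG G Γ Fm.bot) : NIG G Γ F := by
  obtain ⟨p, hp⟩ := h; exact ⟨IGProof.botR p, by simpa [IGProof.orLCount] using hp⟩

theorem andL (h : NIG G (B ::ₘ D ::ₘ (B.conj D) ::ₘ Γ) F) :
    NIG G ((B.conj D) ::ₘ Γ) F := by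
  obtain ⟨p, hp⟩ := h; exact ⟨IGProof.andL p, by simpa [IGProof.orLCount] using hp⟩

theorem andR (h1 : NIG G Γ B) (h2 : NIG G Γ D) : NIG G Γ (B.conj D) := by
  obtain ⟨p, hp⟩ := h1; obtain ⟨q, hq⟩ := h2
  exact ⟨IGProof.andR p q, by simp [IGProof.orLCount, hp, hq]⟩

theorem orR1 (h : NIG G Γ B) : NIG G Γ (B.disj D) := by
  obtain ⟨p, hp⟩ := h; exact ⟨IGProof.orR1 p, by simpa [IGProof.orLCount] using hp⟩

theorem orR2 (h : NIG G Γ D) : NIG G Γ (B.disj D) := by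
  obtain ⟨p, hp⟩ := h; exact ⟨IGProof.orR2 p, by simpa [IGProof.orLCount] using hp⟩

theorem impL (h1 : NIG G ((B.imp D) ::ₘ Γ) B) (h2 : NIG G (D ::ₘ Γ) F) :
    NIG G ((B.imp D) ::ₘ Γ) F := by
  obtain ⟨p, hp⟩ := h1; obtain ⟨q, hq⟩ := h2
  exact ⟨IGProof.impL p q, by simp [IGProof.orLCount, hp, hq]⟩

theorem impR (h : NIG G (B ::ₘ Γ) D) : NIG G Γ (B.imp D) := by
  obtain ⟨p, hp⟩ := h; exact ⟨IGProof.impR p, by simpa [IGProof.orLCount] using hp⟩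

theorem allL (t : Tm) (h : NIG G ((B.inst t) ::ₘ (Fm.all B) ::ₘ Γ) F) :
    NIG G ((Fm.all B) ::ₘ Γ) F := by
  obtain ⟨p, hp⟩ := h; exact ⟨IGProof.allL t p, by simpa [IGProof.orLCount] using hp⟩

theorem exR (t : Tm) (h : NIG G Γ (B.inst t)) : NIG G Γ (Fm.ex B) := by
  obtain ⟨p, hp⟩ := h; exact ⟨IGProof.exR t p, by simpa [IGProof.orLCount] using hp⟩

theorem exL (c : ℕ) (hc : FreshSeq c ((Fm.ex B) ::ₘ Γ) ({F} : Multiset Fm))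
    (hG : ¬ G.constIn c) (h : NIG G ((B.inst (Tm.const c)) ::ₘ Γ) F) :
    NIG G ((Fm.ex B) ::ₘ Γ) F := by
  obtain ⟨p, hp⟩ := h
  exact ⟨IGProof.exL c hc hG p, by simpa [IGProof.orLCount] using hp⟩

theorem allR (c : ℕ) (hc : FreshSeq c Γ ({Fm.all B} : Multiset Fm))
    (hG : ¬ G.constIn c) (h : NIG G Γ (B.inst (Tm.const c))) :
    NIG G Γ (Fm.all B) := by
  obtain ⟨p, hp⟩ := h
  exact ⟨IGProof.allR c hc hG p, by simpa [IGProof.orLCount] using hp⟩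

theorem orLG (h1 : NIG G (B ::ₘ Γ) F) (h2 : NIG G (D ::ₘ Γ) G) :
    NIG G ((B.disj D) ::ₘ Γ) F := by
  obtain ⟨p, hp⟩ := h1; obtain ⟨q, hq⟩ := h2
  exact ⟨IGProof.orLG p q, by simp [IGProof.orLCount, hp, hq]⟩

theorem resG (h : NIG G Γ G) : NIG G Γ F := by
  obtain ⟨p, hp⟩ := h; exact ⟨IGProof.resG p, by simpa [IGProof.orLCount] using hp⟩

end NIG

/-! ### Casting I_G-proofs along multiset equalities -/

def IGProof.igCast {G : Fm} {Γ Γ' : Multiset Fm} {F F' : Fm} (p : IGProof G Γ F)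
    (hΓ : Γ = Γ') (hF : F = F') : IGProof G Γ' F' := hΓ ▸ hF ▸ p

theorem igCast_height {G : Fm} {Γ Γ' : Multiset Fm} {F F' : Fm} (p : IGProof G Γ F)
    (hΓ : Γ = Γ') (hF : F = F') : (p.igCast hΓ hF).height = p.height := by
  subst hΓ; subst hF; rfl

theorem igCast_orLCount {G : Fm} {Γ Γ' : Multiset Fm} {F F' : Fm} (p : IGProof G Γ F)
    (hΓ : Γ = Γ') (hF : F = F') : (p.igCast hΓ hF).orLCount = p.orLCount := by
  subst hΓ; subst hF; rfl

def IGProof.igCastG {G G' : Fm} {Γ : Multiset Fm} {F : Fm} (p : IGProof G Γ F)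
    (hG : G = G') : IGProof G' Γ F := hG ▸ p

theorem igCastG_height {G G' : Fm} {Γ : Multiset Fm} {F : Fm} (p : IGProof G Γ F)
    (hG : G = G') : (p.igCastG hG).height = p.height := by subst hG; rfl

theorem igCastG_orLCount {G G' : Fm} {Γ : Multiset Fm} {F : Fm} (p : IGProof G Γ F)
    (hG : G = G') : (p.igCastG hG).orLCount = p.orLCount := by subst hG; rfl

/-! ### Renaming of constants in I_G-proofs -/

open Function in
/-- Renaming of constants throughout an I_G-proof, with capture-avoiding
treatment of eigenvariables. -/
def igRen {G : Fm} : ∀ {Γ : Multiset Fm} {F : Fm}, IGProof G Γ F → ∀ ρ : ℕ → ℕ,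
    IGProof (G.ren ρ) (Γ.map (Fm.ren ρ)) (F.ren ρ)
  | _, _, .ax h, ρ => .ax (by simpa using AxSeq_map h ρ)
  | _, _, @IGProof.contrL _ B Γ F sub, ρ =>
      (IGProof.contrL (B := B.ren ρ) (Γ := Γ.map (Fm.ren ρ))
        ((igRen sub ρ).igCast (by simp) rfl)).igCast (by simp) rfl
  | _, _, @IGProof.botR _ Γ F sub, ρ => .botR ((igRen sub ρ).igCast rfl rfl)
  | _, _, @IGProof.andL _ B D Γ F sub, ρ =>
      (IGProof.andL (B := B.ren ρ) (D := D.ren ρ) (Γ := Γ.map (Fm.ren ρ))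
        ((igRen sub ρ).igCast (by simp [Fm.ren]) rfl)).igCast (by simp [Fm.ren]) rfl
  | _, _, @IGProof.andR _ B D Γ s1 s2, ρ =>
      (IGProof.andR (igRen s1 ρ) (igRen s2 ρ)).igCast rfl (by simp [Fm.ren])
  | _, _, @IGProof.orL _ B D Γ F s1 s2, ρ =>
      (IGProof.orL (B := B.ren ρ) (D := D.ren ρ) (Γ := Γ.map (Fm.ren ρ))
        ((igRen s1 ρ).igCast (by simp) rfl)
        ((igRen s2 ρ).igCast (by simp) rfl)).igCast (by simp [Fm.ren]) rfl
  | _, _, @IGProof.orR1 _ B D Γ sub, ρ =>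
      (IGProof.orR1 (D := D.ren ρ) (igRen sub ρ)).igCast rfl (by simp [Fm.ren])
  | _, _, @IGProof.orR2 _ B D Γ sub, ρ =>
      (IGProof.orR2 (B := B.ren ρ) (igRen sub ρ)).igCast rfl (by simp [Fm.ren])
  | _, _, @IGProof.impL _ B D Γ F s1 s2, ρ =>
      (IGProof.impL (B := B.ren ρ) (D := D.ren ρ) (Γ := Γ.map (Fm.ren ρ))
        ((igRen s1 ρ).igCast (by simp [Fm.ren]) rfl)
        ((igRen s2 ρ).igCast (by simp) rfl)).igCast (by simp [Fm.ren]) rfl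
  | _, _, @IGProof.impR _ B D Γ sub, ρ =>
      (IGProof.impR (B := B.ren ρ) (D := D.ren ρ) (Γ := Γ.map (Fm.ren ρ))
        ((igRen sub ρ).igCast (by simp) rfl)).igCast rfl (by simp [Fm.ren])
  | _, _, @IGProof.allL _ B Γ F t sub, ρ =>
      (IGProof.allL (B := B.ren ρ) (Γ := Γ.map (Fm.ren ρ)) (t.ren ρ)
        ((igRen sub ρ).igCast (by simp [Fm.ren, Fm.ren_inst]) rfl)).igCast
        (by simp [Fm.ren]) rfl
  | _, _, @IGProof.exR _ B Γ t sub, ρ =>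
      (IGProof.exR (B := B.ren ρ) (t.ren ρ)
        ((igRen sub ρ).igCast rfl (by simp [Fm.ren_inst]))).igCast rfl (by simp [Fm.ren])
  | _, _, @IGProof.exL _ B Γ F c hc hG sub, ρ =>
      let s : Finset ℕ := mconsts ((Fm.ex B) ::ₘ Γ) ∪ F.consts ∪ G.consts
      let c' : ℕ := freshC (s.image ρ)
      let ρ' : ℕ → ℕ := Function.update ρ c c'
      have hBc : c ∉ (Fm.ex B).consts := fun h =>
        (hc.1 (Fm.ex B) (Multiset.mem_cons_self _ _)) (Fm.constIn_iff_mem.2 h)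
      have e1 : G.ren ρ' = G.ren ρ := Fm.ren_congr fun d hd =>
        Function.update_of_ne (fun h => hG (by rw [h] at hd; exact Fm.constIn_iff_mem.2 hd)) _ _
      have e2 : F.ren ρ' = F.ren ρ := Fm.ren_congr fun d hd =>
        Function.update_of_ne (fun h => (hc.2 F (Multiset.mem_singleton_self F))
          (by rw [h] at hd; exact Fm.constIn_iff_mem.2 hd)) _ _
      have e3 : Γ.map (Fm.ren ρ') = Γ.map (Fm.ren ρ) :=
        Multiset.map_congr rfl fun X hX => Fm.ren_congr fun d hd =>
          Function.update_of_ne (fun h => (hc.1 X (Multiset.mem_cons_of_mem hX))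
            (by rw [h] at hd; exact Fm.constIn_iff_mem.2 hd)) _ _
      have e4 : (B.inst (Tm.const c)).ren ρ' = (B.ren ρ).inst (Tm.const c') := by
        rw [Fm.ren_inst]
        have eB : B.ren ρ' = B.ren ρ := Fm.ren_congr fun d hd =>
          Function.update_of_ne (fun h => hBc (by rw [← h]; exact hd)) _ _
        have eT : Tm.ren ρ' (Tm.const c) = Tm.const c' := by
          simp [Tm.ren, ρ', Function.update_self]
        rw [eB, eT]
      have hsub : ∀ X : Fm, X ∈ (Fm.ex B) ::ₘ Γ → X.consts ⊆ s := fun X hX =>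
        subset_trans (consts_subset_mconsts hX)
          (subset_trans Finset.subset_union_left Finset.subset_union_left)
      have hcfresh : FreshSeq c' (Fm.ex (B.ren ρ) ::ₘ Γ.map (Fm.ren ρ))
          ({F.ren ρ} : Multiset Fm) := by
        constructor
        · intro X hX
          rcases Multiset.mem_cons.1 hX with rfl | hX
          · exact not_constIn_ren_image (X := Fm.ex B)
              (hsub _ (Multiset.mem_cons_self _ _))
          · obtain ⟨Y, hY, rfl⟩ := Multiset.mem_map.1 hX
            exact not_constIn_ren_image (hsub Y (Multiset.mem_cons_of_mem hY))
        · intro X hX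
          rw [Multiset.mem_singleton] at hX
          subst hX
          exact not_constIn_ren_image
            (subset_trans Finset.subset_union_right Finset.subset_union_left)
      have hGfresh : ¬ (G.ren ρ).constIn c' :=
        not_constIn_ren_image Finset.subset_union_right
      (IGProof.exL (B := B.ren ρ) (Γ := Γ.map (Fm.ren ρ)) c' hcfresh hGfresh
        ((igRen sub ρ').igCast (by rw [Multiset.map_cons, e4, e3]) e2 |>.igCastG e1)).igCast
        (by simp [Fm.ren]) rfl
  | _, _, @IGProof.allR _ B Γ c hc hG sub, ρ =>
      let s : Finset ℕ := mconsts Γ ∪ (Fm.all B).consts ∪ G.consts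
      let c' : ℕ := freshC (s.image ρ)
      let ρ' : ℕ → ℕ := Function.update ρ c c'
      have hBc : c ∉ (Fm.all B).consts := fun h =>
        (hc.2 (Fm.all B) (Multiset.mem_singleton_self _)) (Fm.constIn_iff_mem.2 h)
      have e1 : G.ren ρ' = G.ren ρ := Fm.ren_congr fun d hd =>
        Function.update_of_ne (fun h => hG (by rw [h] at hd; exact Fm.constIn_iff_mem.2 hd)) _ _
      have e3 : Γ.map (Fm.ren ρ') = Γ.map (Fm.ren ρ) :=
        Multiset.map_congr rfl fun X hX => Fm.ren_congr fun d hd =>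
          Function.update_of_ne (fun h => (hc.1 X hX)
            (by rw [h] at hd; exact Fm.constIn_iff_mem.2 hd)) _ _
      have e4 : (B.inst (Tm.const c)).ren ρ' = (B.ren ρ).inst (Tm.const c') := by
        rw [Fm.ren_inst]
        have eB : B.ren ρ' = B.ren ρ := Fm.ren_congr fun d hd =>
          Function.update_of_ne (fun h => hBc (by rw [← h]; exact hd)) _ _
        have eT : Tm.ren ρ' (Tm.const c) = Tm.const c' := by
          simp [Tm.ren, ρ', Function.update_self]
        rw [eB, eT]
      have hcfresh : FreshSeq c' (Γ.map (Fm.ren ρ)) ({Fm.all (B.ren ρ)} : Multiset Fm) := by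
        constructor
        · intro X hX
          obtain ⟨Y, hY, rfl⟩ := Multiset.mem_map.1 hX
          exact not_constIn_ren_image (subset_trans (consts_subset_mconsts hY)
            (subset_trans Finset.subset_union_left Finset.subset_union_left))
        · intro X hX
          rw [Multiset.mem_singleton] at hX
          subst hX
          exact not_constIn_ren_image (X := Fm.all B)
            (subset_trans Finset.subset_union_right Finset.subset_union_left)
      have hGfresh : ¬ (G.ren ρ).constIn c' :=
        not_constIn_ren_image Finset.subset_union_right
      (IGProof.allR (B := B.ren ρ) (Γ := Γ.map (Fm.ren ρ)) c' hcfresh hGfresh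
        ((igRen sub ρ').igCast e3 e4 |>.igCastG e1)).igCast rfl (by simp [Fm.ren])
  | _, _, @IGProof.orLG _ B D Γ F s1 s2, ρ =>
      (IGProof.orLG (B := B.ren ρ) (D := D.ren ρ) (Γ := Γ.map (Fm.ren ρ))
        ((igRen s1 ρ).igCast (by simp) rfl)
        ((igRen s2 ρ).igCast (by simp) rfl)).igCast (by simp [Fm.ren]) rfl
  | _, _, @IGProof.resG _ Γ F sub, ρ => .resG (igRen sub ρ)

theorem igRen_height {G : Fm} : ∀ {Γ : Multiset Fm} {F : Fm} (p : IGProof G Γ F)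
    (ρ : ℕ → ℕ), (igRen p ρ).height = p.height := by
  intro Γ F p
  induction p with
  | ax h => intro ρ; rw [igRen]; exact (IGProof.height.eq_1 _ _ _ _).trans (IGProof.height.eq_1 _ _ _ h).symm
  | contrL sub ih => intro ρ; simp [igRen, IGProof.height, igCast_height, ih]
  | botR sub ih => intro ρ; rw [igRen, IGProof.height]; erw [igCast_height, ih]; rw [IGProof.height]
  | andL sub ih => intro ρ; simp [igRen, IGProof.height, igCast_height, ih]
  | andR s1 s2 ih1 ih2 =>
      intro ρ; rw [igRen]; erw [igCast_height]; rw [IGProof.height]; erw [ih1, ih2]; rw [IGProof.height]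
  | orL s1 s2 ih1 ih2 =>
      intro ρ; simp [igRen, IGProof.height, igCast_height, ih1, ih2]
  | orR1 sub ih => intro ρ; rw [igRen]; erw [igCast_height]; rw [IGProof.height]; erw [ih]; rw [IGProof.height]
  | orR2 sub ih => intro ρ; rw [igRen]; erw [igCast_height]; rw [IGProof.height]; erw [ih]; rw [IGProof.height]
  | impL s1 s2 ih1 ih2 =>
      intro ρ; simp [igRen, IGProof.height, igCast_height, ih1, ih2]
  | impR sub ih => intro ρ; rw [igRen]; erw [igCast_height]; rw [IGProof.height]; erw [igCast_height, ih]; rw [IGProof.height]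
  | allL t sub ih => intro ρ; simp [igRen, IGProof.height, igCast_height, ih]
  | exR t sub ih => intro ρ; rw [igRen]; erw [igCast_height]; rw [IGProof.height]; erw [igCast_height, ih]; rw [IGProof.height]
  | exL c hc hG sub ih =>
      intro ρ; rw [igRen]; erw [igCast_height]; refine (IGProof.height.eq_13 ..).trans ?_; erw [igCastG_height, igCast_height, ih]; rw [IGProof.height]
  | allR c hc hG sub ih =>
      intro ρ; rw [igRen]; erw [igCast_height]; refine (IGProof.height.eq_14 ..).trans ?_; erw [igCastG_height, igCast_height, ih]; rw [IGProof.height]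
  | orLG s1 s2 ih1 ih2 =>
      intro ρ; simp [igRen, IGProof.height, igCast_height, ih1, ih2]
  | resG sub ih => intro ρ; simp [igRen, IGProof.height, igCast_height, ih]

theorem igRen_orLCount {G : Fm} : ∀ {Γ : Multiset Fm} {F : Fm} (p : IGProof G Γ F)
    (ρ : ℕ → ℕ), (igRen p ρ).orLCount = p.orLCount := by
  intro Γ F p
  induction p with
  | ax h => intro ρ; rw [igRen]; exact (IGProof.orLCount.eq_1 _ _ _ _).trans (IGProof.orLCount.eq_1 _ _ _ h).symm
  | contrL sub ih => intro ρ; simp [igRen, IGProof.orLCount, igCast_orLCount, ih]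
  | botR sub ih => intro ρ; rw [igRen, IGProof.orLCount]; erw [igCast_orLCount, ih]; rw [IGProof.orLCount]
  | andL sub ih => intro ρ; simp [igRen, IGProof.orLCount, igCast_orLCount, ih]
  | andR s1 s2 ih1 ih2 =>
      intro ρ; rw [igRen]; erw [igCast_orLCount]; rw [IGProof.orLCount]; erw [ih1, ih2]; rw [IGProof.orLCount]
  | orL s1 s2 ih1 ih2 =>
      intro ρ; simp [igRen, IGProof.orLCount, igCast_orLCount, ih1, ih2]
  | orR1 sub ih => intro ρ; rw [igRen]; erw [igCast_orLCount]; rw [IGProof.orLCount]; erw [ih]; rw [IGProof.orLCount]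
  | orR2 sub ih => intro ρ; rw [igRen]; erw [igCast_orLCount]; rw [IGProof.orLCount]; erw [ih]; rw [IGProof.orLCount]
  | impL s1 s2 ih1 ih2 =>
      intro ρ; simp [igRen, IGProof.orLCount, igCast_orLCount, ih1, ih2]
  | impR sub ih => intro ρ; rw [igRen]; erw [igCast_orLCount]; rw [IGProof.orLCount]; erw [igCast_orLCount, ih]; rw [IGProof.orLCount]
  | allL t sub ih => intro ρ; simp [igRen, IGProof.orLCount, igCast_orLCount, ih]
  | exR t sub ih => intro ρ; rw [igRen]; erw [igCast_orLCount]; rw [IGProof.orLCount]; erw [igCast_orLCount, ih]; rw [IGProof.orLCount]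
  | exL c hc hG sub ih =>
      intro ρ; rw [igRen]; erw [igCast_orLCount]; refine (IGProof.orLCount.eq_13 ..).trans ?_; erw [igCastG_orLCount, igCast_orLCount, ih]; rw [IGProof.orLCount]
  | allR c hc hG sub ih =>
      intro ρ; rw [igRen]; erw [igCast_orLCount]; refine (IGProof.orLCount.eq_14 ..).trans ?_; erw [igCastG_orLCount, igCast_orLCount, ih]; rw [IGProof.orLCount]
  | orLG s1 s2 ih1 ih2 =>
      intro ρ; simp [igRen, IGProof.orLCount, igCast_orLCount, ih1, ih2]
  | resG sub ih => intro ρ; simp [igRen, IGProof.orLCount, igCast_orLCount, ih]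

/-! ### Iterated contraction -/

theorem igContrMany {G : Fm} : ∀ (S : Multiset Fm) {Γ : Multiset Fm} {F : Fm},
    NIG G (S + (S + Γ)) F → NIG G (S + Γ) F := by
  intro S
  induction S using Multiset.induction with
  | empty => intro Γ F h; simpa using h
  | cons a S ih =>
      intro Γ F h
      have e1 : (a ::ₘ S) + ((a ::ₘ S) + Γ) = a ::ₘ a ::ₘ (S + (S + Γ)) := by
        simp only [← Multiset.singleton_add]; abel
      have h2 : NIG G (a ::ₘ (S + (S + Γ))) F := (NIG_cast e1 h).contrL
      have e2 : a ::ₘ (S + (S + Γ)) = S + (S + (a ::ₘ Γ)) := by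
        simp only [← Multiset.singleton_add]; abel
      have h3 := ih (NIG_cast e2 h2)
      exact NIG_cast (by simp only [← Multiset.singleton_add]; abel) h3


/-! ### The strengthening lemma: covers may replace context formulas -/

theorem ig_height_pos {G : Fm} {Γ : Multiset Fm} {F : Fm} (p : IGProof G Γ F) :
    0 < p.height := by
  cases p <;> simp [IGProof.height]

theorem upd_consts {F : Fm} {c c' : ℕ} (h : ¬ F.constIn c) :
    ∀ d ∈ F.consts, Function.update id c c' d = d := by
  intro d hd
  refine Function.update_of_ne (fun he => h ?_) _ _
  rw [he] at hd
  exact Fm.constIn_iff_mem.2 hd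

theorem ren_upd_eq_self {F : Fm} {c c' : ℕ} (h : ¬ F.constIn c) :
    F.ren (Function.update id c c') = F := Fm.ren_eq_self (upd_consts h)

theorem map_ren_upd_eq_self {Γ : Multiset Fm} {c c' : ℕ}
    (h : ∀ X ∈ Γ, ¬ X.constIn c) : Γ.map (Fm.ren (Function.update id c c')) = Γ := by
  rw [show Γ.map (Fm.ren (Function.update id c c')) = Γ.map id from
    Multiset.map_congr rfl fun X hX => Fm.ren_eq_self (upd_consts (h X hX))]
  exact Multiset.map_id Γ

theorem inst_ren_upd {B : Fm} {c c' : ℕ} (h : ¬ B.constIn c) :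
    (B.inst (Tm.const c)).ren (Function.update id c c') = B.inst (Tm.const c') := by
  rw [Fm.ren_inst, ren_upd_eq_self h]
  simp [Tm.ren, Function.update_self]

theorem lemS_aux {G : Fm} : ∀ (n : ℕ) {Γ₂ : Multiset Fm} {F : Fm} (p : IGProof G Γ₂ F),
    p.height ≤ n → p.orLCount = 0 → ∀ {Γ₁ : Multiset Fm}, MsCov Γ₁ Γ₂ → NIG G Γ₁ F := by
  intro n
  induction n with
  | zero =>
      intro Γ₂ F p hh _ _ _
      exact absurd hh (by have := ig_height_pos p; omega)
  | succ n ih =>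
      intro Γ₂ F p hh hcnt Γ₁ hcov
      cases p with
      | ax h =>
          rcases h with htop | ⟨A, hA, h1, h2⟩
          · have hF : Fm.top = F := by simpa using htop
            exact NIG.ax (Or.inl (by rw [← hF]; simp))
          · have hFA : A = F := by simpa using h2
            subst hFA
            exact NIG.ax (Or.inr ⟨A, hA, msCov_mem_atom hcov h1 hA, by simp⟩)
      | @contrL B Γ' F sub =>
          simp only [IGProof.height] at hh
          simp only [IGProof.orLCount] at hcnt
          obtain ⟨S, Γd, hS, hrest, rfl⟩ := msCov_focus hcov
          have h1 : MsCov (S + (S + Γd)) (B ::ₘ B ::ₘ Γ') :=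
            msCov_cons hS (msCov_cons hS hrest)
          exact igContrMany S (ih sub (by omega) hcnt h1)
      | @botR Γ' F sub =>
          simp only [IGProof.height] at hh
          simp only [IGProof.orLCount] at hcnt
          exact NIG.botR (ih sub (by omega) hcnt hcov)
      | @andL B D Γ' F sub =>
          simp only [IGProof.height] at hh
          simp only [IGProof.orLCount] at hcnt
          obtain ⟨S, Γd, hS, hrest, rfl⟩ := msCov_focus hcov
          cases hS with
          | refl =>
              rw [Multiset.singleton_add]
              exact NIG.andL (ih sub (by omega) hcnt
                (msCov_cons_refl B (msCov_cons_refl D (msCov_cons_refl _ hrest))))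
          | @conj S₁ S₂ _ _ hS1 hS2 =>
              have h1 : MsCov (S₁ + (S₂ + ((S₁ + S₂) + ((S₁ + S₂) + Γd))))
                  (B ::ₘ D ::ₘ (B.conj D) ::ₘ Γ') :=
                msCov_cons hS1 (msCov_cons hS2 (msCov_cons (Cov.conj hS1 hS2)
                  (msCov_weak_left' _ hrest)))
              have h2 : MsCov ((S₁ + S₂) + ((S₁ + S₂) + ((S₁ + S₂) + Γd)))
                  (B ::ₘ D ::ₘ (B.conj D) ::ₘ Γ') :=
                msCov_mono_left h1 (le_of_eq (by abel))
              have h3 := igContrMany (S₁ + S₂) (ih sub (by omega) hcnt h2)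
              exact igContrMany (S₁ + S₂) h3
      | @andR B D Γ' s1 s2 =>
          simp only [IGProof.height] at hh
          simp only [IGProof.orLCount] at hcnt
          have hm : max s1.height s2.height ≤ n := by omega
          exact NIG.andR
            (ih s1 (le_trans (le_max_left _ _) hm) (by omega) hcov)
            (ih s2 (le_trans (le_max_right _ _) hm) (by omega) hcov)
      | orL s1 s2 =>
          simp only [IGProof.orLCount] at hcnt
          exact absurd hcnt (by omega)
      | @orR1 B D Γ' s =>
          simp only [IGProof.height] at hh
          simp only [IGProof.orLCount] at hcnt
          exact NIG.orR1 (ih s (by omega) hcnt hcov)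
      | @orR2 B D Γ' s =>
          simp only [IGProof.height] at hh
          simp only [IGProof.orLCount] at hcnt
          exact NIG.orR2 (ih s (by omega) hcnt hcov)
      | @impL B D Γ' F s1 s2 =>
          simp only [IGProof.height] at hh
          simp only [IGProof.orLCount] at hcnt
          have hm : max s1.height s2.height ≤ n := by omega
          obtain ⟨S, Γd, hS, hrest, rfl⟩ := msCov_focus hcov
          cases hS with
          | refl =>
              rw [Multiset.singleton_add]
              exact NIG.impL
                (ih s1 (le_trans (le_max_left _ _) hm) (by omega)
                  (msCov_cons_refl _ hrest))
                (ih s2 (le_trans (le_max_right _ _) hm) (by omega)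
                  (msCov_cons_refl _ hrest))
          | imp hS' =>
              exact ih s2 (le_trans (le_max_right _ _) hm) (by omega)
                (msCov_cons hS' hrest)
      | @impR B D Γ' sub =>
          simp only [IGProof.height] at hh
          simp only [IGProof.orLCount] at hcnt
          exact NIG.impR (ih sub (by omega) hcnt (msCov_cons_refl B hcov))
      | @allL B Γ' F t sub =>
          simp only [IGProof.height] at hh
          simp only [IGProof.orLCount] at hcnt
          obtain ⟨S, Γd, hS, hrest, rfl⟩ := msCov_focus hcov
          cases hS with
          | refl =>
              rw [Multiset.singleton_add]
              exact NIG.allL t (ih sub (by omega) hcnt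
                (msCov_cons_refl _ (msCov_cons_refl _ hrest)))
      | @exL B Γ' F c hc hG sub =>
          simp only [IGProof.height] at hh
          simp only [IGProof.orLCount] at hcnt
          obtain ⟨S, Γd, hS, hrest, rfl⟩ := msCov_focus hcov
          have hcB : ¬ B.constIn c := hc.1 (Fm.ex B) (Multiset.mem_cons_self _ _)
          have hcΓ' : ∀ X ∈ Γ', ¬ X.constIn c := fun X hX =>
            hc.1 X (Multiset.mem_cons_of_mem hX)
          have hcF : ¬ F.constIn c := hc.2 F (Multiset.mem_singleton_self F)
          cases hS with
          | refl =>
              rw [Multiset.singleton_add]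
              set s : Finset ℕ :=
                mconsts ((Fm.ex B) ::ₘ Γd) ∪ F.consts ∪ G.consts with hs
              set c' : ℕ := freshC s with hc'def
              obtain ⟨q, hqh, hqc⟩ : ∃ q : IGProof G ((B.inst (Tm.const c')) ::ₘ Γ') F,
                  q.height ≤ n ∧ q.orLCount = 0 := by
                refine ⟨((igRen sub (Function.update id c c')).igCast ?_ ?_).igCastG ?_,
                  ?_, ?_⟩
                · rw [Multiset.map_cons, inst_ren_upd hcB, map_ren_upd_eq_self hcΓ']
                · exact ren_upd_eq_self hcF
                · exact ren_upd_eq_self hG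
                · rw [igCastG_height, igCast_height, igRen_height]; omega
                · rw [igCastG_orLCount, igCast_orLCount, igRen_orLCount]; exact hcnt
              have hres := ih q hqh hqc (msCov_cons_refl _ hrest)
              refine NIG.exL c' ⟨?_, ?_⟩ ?_ hres
              · intro X hX
                exact not_constIn_of_fresh (subset_trans (consts_subset_mconsts hX)
                  (subset_trans Finset.subset_union_left Finset.subset_union_left))
              · intro X hX
                rw [Multiset.mem_singleton] at hX
                subst hX
                exact not_constIn_of_fresh
                  (subset_trans Finset.subset_union_right Finset.subset_union_left)
              · exact not_constIn_of_fresh Finset.subset_union_right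
          | exc c₀ hS' =>
              obtain ⟨q, hqh, hqc⟩ : ∃ q : IGProof G ((B.inst (Tm.const c₀)) ::ₘ Γ') F,
                  q.height ≤ n ∧ q.orLCount = 0 := by
                refine ⟨((igRen sub (Function.update id c c₀)).igCast ?_ ?_).igCastG ?_,
                  ?_, ?_⟩
                · rw [Multiset.map_cons, inst_ren_upd hcB, map_ren_upd_eq_self hcΓ']
                · exact ren_upd_eq_self hcF
                · exact ren_upd_eq_self hG
                · rw [igCastG_height, igCast_height, igRen_height]; omega
                · rw [igCastG_orLCount, igCast_orLCount, igRen_orLCount]; exact hcnt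
              exact ih q hqh hqc (msCov_cons hS' hrest)
      | @exR B Γ' t sub =>
          simp only [IGProof.height] at hh
          simp only [IGProof.orLCount] at hcnt
          exact NIG.exR t (ih sub (by omega) hcnt hcov)
      | @allR B Γ' c hc hG sub =>
          simp only [IGProof.height] at hh
          simp only [IGProof.orLCount] at hcnt
          have hcB : ¬ (Fm.all B).constIn c := hc.2 _ (Multiset.mem_singleton_self _)
          set s : Finset ℕ := mconsts Γ₁ ∪ (Fm.all B).consts ∪ G.consts with hs
          set c' : ℕ := freshC s with hc'def
          obtain ⟨q, hqh, hqc⟩ : ∃ q : IGProof G Γ₂ (B.inst (Tm.const c')),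
              q.height ≤ n ∧ q.orLCount = 0 := by
            refine ⟨((igRen sub (Function.update id c c')).igCast ?_ ?_).igCastG ?_,
              ?_, ?_⟩
            · exact map_ren_upd_eq_self hc.1
            · exact inst_ren_upd hcB
            · exact ren_upd_eq_self hG
            · rw [igCastG_height, igCast_height, igRen_height]; omega
            · rw [igCastG_orLCount, igCast_orLCount, igRen_orLCount]; exact hcnt
          have hres := ih q hqh hqc hcov
          refine NIG.allR c' ⟨?_, ?_⟩ ?_ hres
          · intro X hX
            exact not_constIn_of_fresh (subset_trans (consts_subset_mconsts hX)
              (subset_trans Finset.subset_union_left Finset.subset_union_left))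
          · intro X hX
            rw [Multiset.mem_singleton] at hX
            subst hX
            exact not_constIn_of_fresh
              (subset_trans Finset.subset_union_right Finset.subset_union_left)
          · exact not_constIn_of_fresh Finset.subset_union_right
      | @orLG B D Γ' F s1 s2 =>
          simp only [IGProof.height] at hh
          simp only [IGProof.orLCount] at hcnt
          have hm : max s1.height s2.height ≤ n := by omega
          obtain ⟨S, Γd, hS, hrest, rfl⟩ := msCov_focus hcov
          cases hS with
          | refl =>
              rw [Multiset.singleton_add]
              exact NIG.orLG
                (ih s1 (le_trans (le_max_left _ _) hm) (by omega)
                  (msCov_cons_refl B hrest))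
                (ih s2 (le_trans (le_max_right _ _) hm) (by omega)
                  (msCov_cons_refl D hrest))
          | disjl hS' =>
              exact ih s1 (le_trans (le_max_left _ _) hm) (by omega)
                (msCov_cons hS' hrest)
          | disjr hS' =>
              exact NIG.resG (ih s2 (le_trans (le_max_right _ _) hm) (by omega)
                (msCov_cons hS' hrest))
      | @resG Γ' F sub =>
          simp only [IGProof.height] at hh
          simp only [IGProof.orLCount] at hcnt
          exact NIG.resG (ih sub (by omega) hcnt hcov)

/-- Strengthening: a cover of the context proves the same goals. -/
theorem lemS {G : Fm} {Γ₂ : Multiset Fm} {F : Fm} (h : NIG G Γ₂ F)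
    {Γ₁ : Multiset Fm} (hcov : MsCov Γ₁ Γ₂) : NIG G Γ₁ F := by
  obtain ⟨p, hp⟩ := h
  exact lemS_aux p.height p le_rfl hp hcov


/-! ### Infrastructure for C-proofs -/

namespace CProof

/-- Height of a C-proof. -/
def cheight : ∀ {Γ Δ : Multiset Fm}, CProof Γ Δ → ℕ
  | _, _, ax _ => 1
  | _, _, contrL p => cheight p + 1
  | _, _, contrR p => cheight p + 1
  | _, _, botR p => cheight p + 1
  | _, _, andL p => cheight p + 1
  | _, _, andR p q => max (cheight p) (cheight q) + 1
  | _, _, orL p q => max (cheight p) (cheight q) + 1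
  | _, _, orR1 p => cheight p + 1
  | _, _, orR2 p => cheight p + 1
  | _, _, impL p q => max (cheight p) (cheight q) + 1
  | _, _, impR p => cheight p + 1
  | _, _, allL _ p => cheight p + 1
  | _, _, exR _ p => cheight p + 1
  | _, _, exL _ _ p => cheight p + 1
  | _, _, allR _ _ p => cheight p + 1

theorem cheight_pos : ∀ {Γ Δ : Multiset Fm} (p : CProof Γ Δ), 0 < p.cheight := by
  intro Γ Δ p
  cases p <;> simp [cheight]

def cCast {Γ Γ' Δ Δ' : Multiset Fm} (p : CProof Γ Δ) (h1 : Γ = Γ') (h2 : Δ = Δ') :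
    CProof Γ' Δ' := h1 ▸ h2 ▸ p

theorem cCast_cheight {Γ Γ' Δ Δ' : Multiset Fm} (p : CProof Γ Δ) (h1 : Γ = Γ')
    (h2 : Δ = Δ') : (p.cCast h1 h2).cheight = p.cheight := by
  subst h1; subst h2; rfl

end CProof

open Function in
/-- Renaming of constants throughout a C-proof. -/
def cRen : ∀ {Γ Δ : Multiset Fm}, CProof Γ Δ → ∀ ρ : ℕ → ℕ,
    CProof (Γ.map (Fm.ren ρ)) (Δ.map (Fm.ren ρ))
  | _, _, .ax h, ρ => .ax (AxSeq_map h ρ)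
  | _, _, @CProof.contrL B Γ Δ sub, ρ =>
      (CProof.contrL (B := B.ren ρ) (Γ := Γ.map (Fm.ren ρ))
        ((cRen sub ρ).cCast (by simp) rfl)).cCast (by simp) rfl
  | _, _, @CProof.contrR B Γ Δ sub, ρ =>
      (CProof.contrR (B := B.ren ρ) (Δ := Δ.map (Fm.ren ρ))
        ((cRen sub ρ).cCast rfl (by simp))).cCast rfl (by simp)
  | _, _, @CProof.botR D Γ Δ sub, ρ =>
      (CProof.botR (D := D.ren ρ) (Δ := Δ.map (Fm.ren ρ))
        ((cRen sub ρ).cCast rfl (by simp [Fm.ren]))).cCast rfl (by simp)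
  | _, _, @CProof.andL B D Γ Δ sub, ρ =>
      (CProof.andL (B := B.ren ρ) (D := D.ren ρ) (Γ := Γ.map (Fm.ren ρ))
        ((cRen sub ρ).cCast (by simp [Fm.ren]) rfl)).cCast (by simp [Fm.ren]) rfl
  | _, _, @CProof.andR B D Γ Δ s1 s2, ρ =>
      (CProof.andR (B := B.ren ρ) (D := D.ren ρ) (Δ := Δ.map (Fm.ren ρ))
        ((cRen s1 ρ).cCast rfl (by simp))
        ((cRen s2 ρ).cCast rfl (by simp))).cCast rfl (by simp [Fm.ren])
  | _, _, @CProof.orL B D Γ Δ s1 s2, ρ =>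
      (CProof.orL (B := B.ren ρ) (D := D.ren ρ) (Γ := Γ.map (Fm.ren ρ))
        ((cRen s1 ρ).cCast (by simp) rfl)
        ((cRen s2 ρ).cCast (by simp) rfl)).cCast (by simp [Fm.ren]) rfl
  | _, _, @CProof.orR1 B D Γ Δ sub, ρ =>
      (CProof.orR1 (B := B.ren ρ) (D := D.ren ρ) (Δ := Δ.map (Fm.ren ρ))
        ((cRen sub ρ).cCast rfl (by simp))).cCast rfl (by simp [Fm.ren])
  | _, _, @CProof.orR2 B D Γ Δ sub, ρ =>
      (CProof.orR2 (B := B.ren ρ) (D := D.ren ρ) (Δ := Δ.map (Fm.ren ρ))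
        ((cRen sub ρ).cCast rfl (by simp))).cCast rfl (by simp [Fm.ren])
  | _, _, @CProof.impL B D Γ Δ Θ s1 s2, ρ =>
      (CProof.impL (B := B.ren ρ) (D := D.ren ρ) (Γ := Γ.map (Fm.ren ρ))
        (Δ := Δ.map (Fm.ren ρ)) (Θ := Θ.map (Fm.ren ρ))
        ((cRen s1 ρ).cCast (by simp [Fm.ren]) (by simp))
        ((cRen s2 ρ).cCast (by simp) rfl)).cCast (by simp [Fm.ren]) (by simp)
  | _, _, @CProof.impR B D Γ Δ sub, ρ =>
      (CProof.impR (B := B.ren ρ) (D := D.ren ρ) (Δ := Δ.map (Fm.ren ρ))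
        ((cRen sub ρ).cCast (by simp) (by simp))).cCast rfl (by simp [Fm.ren])
  | _, _, @CProof.allL B Γ Δ t sub, ρ =>
      (CProof.allL (B := B.ren ρ) (Γ := Γ.map (Fm.ren ρ)) (t.ren ρ)
        ((cRen sub ρ).cCast (by simp [Fm.ren, Fm.ren_inst]) rfl)).cCast
        (by simp [Fm.ren]) rfl
  | _, _, @CProof.exR B Γ Δ t sub, ρ =>
      (CProof.exR (B := B.ren ρ) (Δ := Δ.map (Fm.ren ρ)) (t.ren ρ)
        ((cRen sub ρ).cCast rfl (by simp [Fm.ren_inst]))).cCast rfl (by simp [Fm.ren])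
  | _, _, @CProof.exL B Γ Δ c hc sub, ρ =>
      let s : Finset ℕ := mconsts ((Fm.ex B) ::ₘ Γ) ∪ mconsts Δ
      let c' : ℕ := freshC (s.image ρ)
      let ρ' : ℕ → ℕ := Function.update ρ c c'
      have hBc : c ∉ (Fm.ex B).consts := fun h =>
        (hc.1 (Fm.ex B) (Multiset.mem_cons_self _ _)) (Fm.constIn_iff_mem.2 h)
      have e2 : Δ.map (Fm.ren ρ') = Δ.map (Fm.ren ρ) :=
        Multiset.map_congr rfl fun X hX => Fm.ren_congr fun d hd =>
          Function.update_of_ne (fun h => (hc.2 X hX)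
            (by rw [h] at hd; exact Fm.constIn_iff_mem.2 hd)) _ _
      have e3 : Γ.map (Fm.ren ρ') = Γ.map (Fm.ren ρ) :=
        Multiset.map_congr rfl fun X hX => Fm.ren_congr fun d hd =>
          Function.update_of_ne (fun h => (hc.1 X (Multiset.mem_cons_of_mem hX))
            (by rw [h] at hd; exact Fm.constIn_iff_mem.2 hd)) _ _
      have e4 : (B.inst (Tm.const c)).ren ρ' = (B.ren ρ).inst (Tm.const c') := by
        rw [Fm.ren_inst]
        have eB : B.ren ρ' = B.ren ρ := Fm.ren_congr fun d hd =>
          Function.update_of_ne (fun h => hBc (by rw [← h]; exact hd)) _ _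
        have eT : Tm.ren ρ' (Tm.const c) = Tm.const c' := by
          simp [Tm.ren, ρ', Function.update_self]
        rw [eB, eT]
      have hsub : ∀ X : Fm, X ∈ (Fm.ex B) ::ₘ Γ → X.consts ⊆ s := fun X hX =>
        subset_trans (consts_subset_mconsts hX) Finset.subset_union_left
      have hcfresh : FreshSeq c' (Fm.ex (B.ren ρ) ::ₘ Γ.map (Fm.ren ρ))
          (Δ.map (Fm.ren ρ)) := by
        constructor
        · intro X hX
          rcases Multiset.mem_cons.1 hX with rfl | hX
          · exact not_constIn_ren_image (X := Fm.ex B)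
              (hsub _ (Multiset.mem_cons_self _ _))
          · obtain ⟨Y, hY, rfl⟩ := Multiset.mem_map.1 hX
            exact not_constIn_ren_image (hsub Y (Multiset.mem_cons_of_mem hY))
        · intro X hX
          obtain ⟨Y, hY, rfl⟩ := Multiset.mem_map.1 hX
          exact not_constIn_ren_image
            (subset_trans (consts_subset_mconsts hY) Finset.subset_union_right)
      (CProof.exL (B := B.ren ρ) (Γ := Γ.map (Fm.ren ρ)) c' hcfresh
        ((cRen sub ρ').cCast (by rw [Multiset.map_cons, e4, e3]) e2)).cCast
        (by simp [Fm.ren]) rfl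
  | _, _, @CProof.allR B Γ Δ c hc sub, ρ =>
      let s : Finset ℕ := mconsts Γ ∪ mconsts ((Fm.all B) ::ₘ Δ)
      let c' : ℕ := freshC (s.image ρ)
      let ρ' : ℕ → ℕ := Function.update ρ c c'
      have hBc : c ∉ (Fm.all B).consts := fun h =>
        (hc.2 (Fm.all B) (Multiset.mem_cons_self _ _)) (Fm.constIn_iff_mem.2 h)
      have e2 : Δ.map (Fm.ren ρ') = Δ.map (Fm.ren ρ) :=
        Multiset.map_congr rfl fun X hX => Fm.ren_congr fun d hd =>
          Function.update_of_ne (fun h => (hc.2 X (Multiset.mem_cons_of_mem hX))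
            (by rw [h] at hd; exact Fm.constIn_iff_mem.2 hd)) _ _
      have e3 : Γ.map (Fm.ren ρ') = Γ.map (Fm.ren ρ) :=
        Multiset.map_congr rfl fun X hX => Fm.ren_congr fun d hd =>
          Function.update_of_ne (fun h => (hc.1 X hX)
            (by rw [h] at hd; exact Fm.constIn_iff_mem.2 hd)) _ _
      have e4 : (B.inst (Tm.const c)).ren ρ' = (B.ren ρ).inst (Tm.const c') := by
        rw [Fm.ren_inst]
        have eB : B.ren ρ' = B.ren ρ := Fm.ren_congr fun d hd =>
          Function.update_of_ne (fun h => hBc (by rw [← h]; exact hd)) _ _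
        have eT : Tm.ren ρ' (Tm.const c) = Tm.const c' := by
          simp [Tm.ren, ρ', Function.update_self]
        rw [eB, eT]
      have hcfresh : FreshSeq c' (Γ.map (Fm.ren ρ))
          (Fm.all (B.ren ρ) ::ₘ Δ.map (Fm.ren ρ)) := by
        constructor
        · intro X hX
          obtain ⟨Y, hY, rfl⟩ := Multiset.mem_map.1 hX
          exact not_constIn_ren_image
            (subset_trans (consts_subset_mconsts hY) Finset.subset_union_left)
        · intro X hX
          rcases Multiset.mem_cons.1 hX with rfl | hX
          · exact not_constIn_ren_image (X := Fm.all B)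
              (subset_trans (consts_subset_mconsts (Multiset.mem_cons_self _ _))
                Finset.subset_union_right)
          · obtain ⟨Y, hY, rfl⟩ := Multiset.mem_map.1 hX
            exact not_constIn_ren_image
              (subset_trans (consts_subset_mconsts (Multiset.mem_cons_of_mem hY))
                Finset.subset_union_right)
      (CProof.allR (B := B.ren ρ) (Δ := Δ.map (Fm.ren ρ)) c' hcfresh
        ((cRen sub ρ').cCast e3 (by rw [Multiset.map_cons, e4, e2]))).cCast
        rfl (by simp [Fm.ren])

theorem cRen_cheight : ∀ {Γ Δ : Multiset Fm} (p : CProof Γ Δ) (ρ : ℕ → ℕ),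
    (cRen p ρ).cheight = p.cheight := by
  intro Γ Δ p
  induction p with
  | ax h => intro ρ; simp [cRen, CProof.cheight]
  | contrL sub ih => intro ρ; simp [cRen, CProof.cheight, CProof.cCast_cheight, ih]
  | contrR sub ih => intro ρ; simp [cRen, CProof.cheight, CProof.cCast_cheight, ih]
  | botR sub ih => intro ρ; simp [cRen, CProof.cheight, CProof.cCast_cheight, ih]
  | andL sub ih => intro ρ; simp [cRen, CProof.cheight, CProof.cCast_cheight, ih]
  | andR s1 s2 ih1 ih2 =>
      intro ρ; simp [cRen, CProof.cheight, CProof.cCast_cheight, ih1, ih2]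
  | orL s1 s2 ih1 ih2 =>
      intro ρ; simp [cRen, CProof.cheight, CProof.cCast_cheight, ih1, ih2]
  | orR1 sub ih => intro ρ; simp [cRen, CProof.cheight, CProof.cCast_cheight, ih]
  | orR2 sub ih => intro ρ; simp [cRen, CProof.cheight, CProof.cCast_cheight, ih]
  | impL s1 s2 ih1 ih2 =>
      intro ρ; simp [cRen, CProof.cheight, CProof.cCast_cheight, ih1, ih2]
  | impR sub ih => intro ρ; simp [cRen, CProof.cheight, CProof.cCast_cheight, ih]
  | allL t sub ih => intro ρ; simp [cRen, CProof.cheight, CProof.cCast_cheight, ih]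
  | exR t sub ih => intro ρ; simp [cRen, CProof.cheight, CProof.cCast_cheight, ih]
  | exL c hc sub ih => intro ρ; simp [cRen, CProof.cheight, CProof.cCast_cheight, ih]
  | allR c hc sub ih => intro ρ; simp [cRen, CProof.cheight, CProof.cCast_cheight, ih]


/-! ### Right weakening for C-proofs -/

theorem wkR_aux : ∀ (n : ℕ) {Γ Δ : Multiset Fm} (p : CProof Γ Δ), p.cheight ≤ n →
    ∀ A : Fm, Nonempty (CProof Γ (A ::ₘ Δ)) := by
  intro n
  induction n with
  | zero =>
      intro Γ Δ p hh A
      exact absurd hh (by have := CProof.cheight_pos p; omega)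
  | succ n ih =>
      intro Γ Δ p hh A
      cases p with
      | ax h =>
          refine ⟨CProof.ax ?_⟩
          rcases h with h | ⟨A', hA', h1, h2⟩
          · exact Or.inl (Multiset.mem_cons_of_mem h)
          · exact Or.inr ⟨A', hA', h1, Multiset.mem_cons_of_mem h2⟩
      | @contrL B Γ' Δ' sub =>
          simp only [CProof.cheight] at hh
          obtain ⟨q⟩ := ih sub (by omega) A
          exact ⟨q.contrL⟩
      | @contrR B Γ' Δ' sub =>
          simp only [CProof.cheight] at hh
          obtain ⟨q⟩ := ih sub (by omega) A
          refine ⟨(CProof.contrR (B := B) (Δ := A ::ₘ Δ') (q.cCast rfl ?_)).cCast rfl ?_⟩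
          · show A ::ₘ B ::ₘ B ::ₘ Δ' = B ::ₘ B ::ₘ A ::ₘ Δ'
            simp only [← Multiset.singleton_add]; abel
          · simp only [← Multiset.singleton_add]; abel
      | @botR D Γ' Δ' sub =>
          simp only [CProof.cheight] at hh
          obtain ⟨q⟩ := ih sub (by omega) A
          refine ⟨(CProof.botR (D := D) (Δ := A ::ₘ Δ') (q.cCast rfl ?_)).cCast rfl ?_⟩
          · show A ::ₘ Fm.bot ::ₘ Δ' = Fm.bot ::ₘ A ::ₘ Δ'
            simp only [← Multiset.singleton_add]; abel
          · simp only [← Multiset.singleton_add]; abel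
      | @andL B D Γ' Δ' sub =>
          simp only [CProof.cheight] at hh
          obtain ⟨q⟩ := ih sub (by omega) A
          exact ⟨q.andL⟩
      | @andR B D Γ' Δ' s1 s2 =>
          simp only [CProof.cheight] at hh
          obtain ⟨q1⟩ := ih s1 (le_trans (le_trans (le_max_left _ _) (by omega : max s1.cheight s2.cheight ≤ n)) le_rfl) A
          obtain ⟨q2⟩ := ih s2 (le_trans (le_max_right _ _) (by omega : max s1.cheight s2.cheight ≤ n)) A
          refine ⟨(CProof.andR (B := B) (D := D) (Δ := A ::ₘ Δ') (q1.cCast rfl ?_) (q2.cCast rfl ?_)).cCast rfl ?_⟩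
          · show A ::ₘ B ::ₘ Δ' = B ::ₘ A ::ₘ Δ'
            simp only [← Multiset.singleton_add]; abel
          · show A ::ₘ D ::ₘ Δ' = D ::ₘ A ::ₘ Δ'
            simp only [← Multiset.singleton_add]; abel
          · simp only [← Multiset.singleton_add]; abel
      | @orL B D Γ' Δ' s1 s2 =>
          simp only [CProof.cheight] at hh
          have hm : max s1.cheight s2.cheight ≤ n := by omega
          obtain ⟨q1⟩ := ih s1 (le_trans (le_max_left _ _) hm) A
          obtain ⟨q2⟩ := ih s2 (le_trans (le_max_right _ _) hm) A
          exact ⟨CProof.orL q1 q2⟩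
      | @orR1 B D Γ' Δ' sub =>
          simp only [CProof.cheight] at hh
          obtain ⟨q⟩ := ih sub (by omega) A
          refine ⟨(CProof.orR1 (B := B) (D := D) (Δ := A ::ₘ Δ') (q.cCast rfl ?_)).cCast rfl ?_⟩
          · show A ::ₘ B ::ₘ Δ' = B ::ₘ A ::ₘ Δ'
            simp only [← Multiset.singleton_add]; abel
          · simp only [← Multiset.singleton_add]; abel
      | @orR2 B D Γ' Δ' sub =>
          simp only [CProof.cheight] at hh
          obtain ⟨q⟩ := ih sub (by omega) A
          refine ⟨(CProof.orR2 (B := B) (D := D) (Δ := A ::ₘ Δ') (q.cCast rfl ?_)).cCast rfl ?_⟩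
          · show A ::ₘ D ::ₘ Δ' = D ::ₘ A ::ₘ Δ'
            simp only [← Multiset.singleton_add]; abel
          · simp only [← Multiset.singleton_add]; abel
      | @impL B D Γ' Δ' Θ s1 s2 =>
          simp only [CProof.cheight] at hh
          have hm : max s1.cheight s2.cheight ≤ n := by omega
          obtain ⟨q2⟩ := ih s2 (le_trans (le_max_right _ _) hm) A
          refine ⟨(CProof.impL s1 q2).cCast rfl ?_⟩
          simp only [← Multiset.singleton_add]; abel
      | @impR B D Γ' Δ' sub =>
          simp only [CProof.cheight] at hh
          obtain ⟨q⟩ := ih sub (by omega) A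
          refine ⟨(CProof.impR (B := B) (D := D) (Δ := A ::ₘ Δ') (q.cCast rfl ?_)).cCast rfl ?_⟩
          · show A ::ₘ D ::ₘ Δ' = D ::ₘ A ::ₘ Δ'
            simp only [← Multiset.singleton_add]; abel
          · simp only [← Multiset.singleton_add]; abel
      | @allL B Γ' Δ' t sub =>
          simp only [CProof.cheight] at hh
          obtain ⟨q⟩ := ih sub (by omega) A
          exact ⟨CProof.allL t q⟩
      | @exR B Γ' Δ' t sub =>
          simp only [CProof.cheight] at hh
          obtain ⟨q⟩ := ih sub (by omega) A
          refine ⟨(CProof.exR (B := B) (Δ := A ::ₘ Δ') t (q.cCast rfl ?_)).cCast rfl ?_⟩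
          · show A ::ₘ (B.inst t) ::ₘ Δ' = (B.inst t) ::ₘ A ::ₘ Δ'
            simp only [← Multiset.singleton_add]; abel
          · simp only [← Multiset.singleton_add]; abel
      | @exL B Γ' Δ c hc sub =>
          simp only [CProof.cheight] at hh
          have hcB : ¬ B.constIn c := hc.1 (Fm.ex B) (Multiset.mem_cons_self _ _)
          have hcΓ' : ∀ X ∈ Γ', ¬ X.constIn c := fun X hX =>
            hc.1 X (Multiset.mem_cons_of_mem hX)
          set s : Finset ℕ := mconsts ((Fm.ex B) ::ₘ Γ') ∪ mconsts Δ ∪ A.consts with hs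
          set c' : ℕ := freshC s with hc'def
          obtain ⟨q, hq⟩ : ∃ q : CProof ((B.inst (Tm.const c')) ::ₘ Γ') Δ,
              q.cheight ≤ n := by
            refine ⟨(cRen sub (Function.update id c c')).cCast ?_ ?_, ?_⟩
            · rw [Multiset.map_cons, inst_ren_upd hcB, map_ren_upd_eq_self hcΓ']
            · exact map_ren_upd_eq_self hc.2
            · rw [CProof.cCast_cheight, cRen_cheight]; omega
          obtain ⟨q'⟩ := ih q hq A
          refine ⟨CProof.exL c' ⟨?_, ?_⟩ q'⟩
          · intro X hX
            exact not_constIn_of_fresh (subset_trans (consts_subset_mconsts hX)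
              (subset_trans Finset.subset_union_left Finset.subset_union_left))
          · intro X hX
            rcases Multiset.mem_cons.1 hX with rfl | hX
            · exact not_constIn_of_fresh Finset.subset_union_right
            · exact not_constIn_of_fresh (subset_trans (consts_subset_mconsts hX)
                (subset_trans Finset.subset_union_right Finset.subset_union_left))
      | @allR B Γ Δ' c hc sub =>
          simp only [CProof.cheight] at hh
          have hcB : ¬ B.constIn c := hc.2 (Fm.all B) (Multiset.mem_cons_self _ _)
          have hcΔ' : ∀ X ∈ Δ', ¬ X.constIn c := fun X hX =>
            hc.2 X (Multiset.mem_cons_of_mem hX)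
          set s : Finset ℕ := mconsts Γ ∪ mconsts ((Fm.all B) ::ₘ Δ') ∪ A.consts with hs
          set c' : ℕ := freshC s with hc'def
          obtain ⟨q, hq⟩ : ∃ q : CProof Γ ((B.inst (Tm.const c')) ::ₘ Δ'),
              q.cheight ≤ n := by
            refine ⟨(cRen sub (Function.update id c c')).cCast ?_ ?_, ?_⟩
            · exact map_ren_upd_eq_self hc.1
            · rw [Multiset.map_cons, inst_ren_upd hcB, map_ren_upd_eq_self hcΔ']
            · rw [CProof.cCast_cheight, cRen_cheight]; omega
          obtain ⟨q'⟩ := ih q hq A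
          have hfr : FreshSeq c' Γ ((Fm.all B) ::ₘ A ::ₘ Δ') := by
            constructor
            · intro X hX
              exact not_constIn_of_fresh (subset_trans (consts_subset_mconsts hX)
                (subset_trans Finset.subset_union_left Finset.subset_union_left))
            · intro X hX
              rcases Multiset.mem_cons.1 hX with rfl | hX
              · exact not_constIn_of_fresh
                  (subset_trans (consts_subset_mconsts (Multiset.mem_cons_self _ _))
                    (subset_trans Finset.subset_union_right Finset.subset_union_left))
              rcases Multiset.mem_cons.1 hX with rfl | hX
              · exact not_constIn_of_fresh Finset.subset_union_right
              · exact not_constIn_of_fresh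
                  (subset_trans (consts_subset_mconsts (Multiset.mem_cons_of_mem hX))
                    (subset_trans Finset.subset_union_right Finset.subset_union_left))
          refine ⟨(CProof.allR c' hfr (q'.cCast rfl ?_)).cCast rfl ?_⟩
          · show A ::ₘ (B.inst (Tm.const c')) ::ₘ Δ' = (B.inst (Tm.const c')) ::ₘ A ::ₘ Δ'
            simp only [← Multiset.singleton_add]; abel
          · simp only [← Multiset.singleton_add]; abel

theorem wkR {Γ Δ : Multiset Fm} (h : Nonempty (CProof Γ Δ)) (A : Fm) :
    Nonempty (CProof Γ (A ::ₘ Δ)) := by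
  obtain ⟨p⟩ := h
  exact wkR_aux p.cheight p le_rfl A

/-! ### From I_G-proofs to C-proofs -/

theorem igToC {G : Fm} : ∀ {Γ : Multiset Fm} {F : Fm}, IGProof G Γ F →
    Nonempty (CProof Γ (F ::ₘ ({G} : Multiset Fm))) := by
  intro Γ F p
  induction p with
  | ax h =>
      refine ⟨CProof.ax ?_⟩
      rcases h with h | ⟨A', hA', h1, h2⟩
      · rw [Multiset.mem_singleton] at h
        exact Or.inl (by rw [h]; exact Multiset.mem_cons_self _ _)
      · rw [Multiset.mem_singleton] at h2
        exact Or.inr ⟨A', hA', h1, by rw [h2]; exact Multiset.mem_cons_self _ _⟩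
  | contrL sub ih =>
      obtain ⟨q⟩ := ih
      exact ⟨q.contrL⟩
  | @botR Γ' F' sub ih =>
      obtain ⟨q⟩ := ih
      exact ⟨CProof.botR (D := F') q⟩
  | andL sub ih =>
      obtain ⟨q⟩ := ih
      exact ⟨q.andL⟩
  | andR s1 s2 ih1 ih2 =>
      obtain ⟨q1⟩ := ih1
      obtain ⟨q2⟩ := ih2
      exact ⟨CProof.andR q1 q2⟩
  | orL s1 s2 ih1 ih2 =>
      obtain ⟨q1⟩ := ih1
      obtain ⟨q2⟩ := ih2
      exact ⟨CProof.orL q1 q2⟩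
  | orR1 sub ih =>
      obtain ⟨q⟩ := ih
      exact ⟨CProof.orR1 q⟩
  | orR2 sub ih =>
      obtain ⟨q⟩ := ih
      exact ⟨CProof.orR2 q⟩
  | @impL B D Γ' F' s1 s2 ih1 ih2 =>
      obtain ⟨q1⟩ := ih1
      obtain ⟨q2⟩ := ih2
      have q3 := CProof.impL (Δ := ({G} : Multiset Fm)) (Θ := F' ::ₘ ({G} : Multiset Fm))
        q1 q2
      refine ⟨(CProof.contrR (B := G) (Δ := ({F'} : Multiset Fm)) (q3.cCast rfl ?_)).cCast rfl ?_⟩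
      · show ({G} : Multiset Fm) + (F' ::ₘ ({G} : Multiset Fm)) =
          G ::ₘ G ::ₘ ({F'} : Multiset Fm)
        simp only [← Multiset.singleton_add]; abel
      · simp only [← Multiset.singleton_add]; abel
  | impR sub ih =>
      obtain ⟨q⟩ := ih
      exact ⟨CProof.impR q⟩
  | allL t sub ih =>
      obtain ⟨q⟩ := ih
      exact ⟨CProof.allL t q⟩
  | exR t sub ih =>
      obtain ⟨q⟩ := ih
      exact ⟨CProof.exR t q⟩
  | @exL B Γ' F' c hc hG sub ih =>
      obtain ⟨q⟩ := ih
      refine ⟨CProof.exL c ⟨hc.1, ?_⟩ q⟩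
      intro X hX
      rcases Multiset.mem_cons.1 hX with rfl | hX
      · exact hc.2 _ (Multiset.mem_singleton_self _)
      · rw [Multiset.mem_singleton] at hX
        subst hX
        exact hG
  | @allR B Γ' c hc hG sub ih =>
      obtain ⟨q⟩ := ih
      refine ⟨CProof.allR c ⟨hc.1, ?_⟩ q⟩
      intro X hX
      rcases Multiset.mem_cons.1 hX with rfl | hX
      · exact hc.2 _ (Multiset.mem_singleton_self _)
      · rw [Multiset.mem_singleton] at hX
        subst hX
        exact hG
  | @orLG B D Γ' F' s1 s2 ih1 ih2 =>
      obtain ⟨q1⟩ := ih1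
      obtain ⟨q2⟩ := ih2
      have h2 : Nonempty (CProof (D ::ₘ Γ') ({G} : Multiset Fm)) :=
        ⟨CProof.contrR (B := G) (Δ := 0) (q2.cCast rfl (by simp))⟩
      obtain ⟨q2'⟩ := wkR h2 F'
      exact ⟨CProof.orL q1 q2'⟩
  | @resG Γ' F' sub ih =>
      obtain ⟨q⟩ := ih
      have h2 : Nonempty (CProof Γ' ({G} : Multiset Fm)) :=
        ⟨CProof.contrR (B := G) (Δ := 0) (q.cCast rfl (by simp))⟩
      exact wkR h2 F'


/-! ### The main lemma: C-proofs yield I_G-proofs without ∨-L -/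

theorem DFm_imp_inv {B D : Fm} (h : DFm (Fm.imp B D)) : GFm B ∧ DFm D := by
  cases h with | imp hB hD => exact ⟨hB, hD⟩

theorem DFm_conj_inv {B D : Fm} (h : DFm (Fm.conj B D)) : DFm B ∧ DFm D := by
  cases h with | conj hB hD => exact ⟨hB, hD⟩

theorem DFm_disj_inv {B D : Fm} (h : DFm (Fm.disj B D)) : DFm B ∧ DFm D := by
  cases h with | disj hB hD => exact ⟨hB, hD⟩

theorem DFm_ex_inv {B : Fm} (h : DFm (Fm.ex B)) : DFm B := by
  cases h with | ex hB => exact hB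

theorem DFm_all_inv {B : Fm} (h : DFm (Fm.all B)) : DFm B := by
  cases h with | all hB => exact hB

theorem GFm_imp_inv {B D : Fm} (h : GFm (Fm.imp B D)) : DFm B ∧ GFm D := by
  cases h with | imp hB hD => exact ⟨hB, hD⟩

theorem GFm_conj_inv {B D : Fm} (h : GFm (Fm.conj B D)) : GFm B ∧ GFm D := by
  cases h with | conj hB hD => exact ⟨hB, hD⟩

theorem GFm_disj_inv {B D : Fm} (h : GFm (Fm.disj B D)) : GFm B ∧ GFm D := by
  cases h with | disj hB hD => exact ⟨hB, hD⟩

theorem GFm_ex_inv {B : Fm} (h : GFm (Fm.ex B)) : GFm B := by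
  cases h with | ex hB => exact hB

theorem gbot_imp {B D : Fm} (h : GFm (Fm.imp B D) ∨ Fm.imp B D = Fm.bot) :
    DFm B ∧ GFm D := by
  rcases h with h | h
  · exact GFm_imp_inv h
  · exact absurd h (by intro hh; cases hh)

theorem gbot_conj {B D : Fm} (h : GFm (Fm.conj B D) ∨ Fm.conj B D = Fm.bot) :
    GFm B ∧ GFm D := by
  rcases h with h | h
  · exact GFm_conj_inv h
  · exact absurd h (by intro hh; cases hh)

theorem gbot_disj {B D : Fm} (h : GFm (Fm.disj B D) ∨ Fm.disj B D = Fm.bot) :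
    GFm B ∧ GFm D := by
  rcases h with h | h
  · exact GFm_disj_inv h
  · exact absurd h (by intro hh; cases hh)

theorem gbot_ex {B : Fm} (h : GFm (Fm.ex B) ∨ Fm.ex B = Fm.bot) : GFm B := by
  rcases h with h | h
  · exact GFm_ex_inv h
  · exact absurd h (by intro hh; cases hh)

theorem msCov_cons_one {Γ : Multiset Fm} {S : Multiset Fm} {F : Fm} (hc : Cov S F)
    {Γ' : Multiset Fm} (h : MsCov Γ' Γ) (hS : S = 0 ∨ True := Or.inr trivial) :
    MsCov (S + Γ') (F ::ₘ Γ) := msCov_cons hc h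

/-- A single-formula cover gives a cons-shaped `MsCov`. -/
theorem msCov_cons_cov {B F : Fm} {Γ' Γ : Multiset Fm} (hc : Cov ({B} : Multiset Fm) F)
    (h : MsCov Γ' Γ) : MsCov (B ::ₘ Γ') (F ::ₘ Γ) := by
  have := msCov_cons hc h
  rwa [Multiset.singleton_add] at this

theorem lemM {G : Fm} : ∀ (n : ℕ) {Γc Δ : Multiset Fm} (p : CProof Γc Δ),
    p.cheight ≤ n →
    (∀ X ∈ Γc, DFm X) → (∀ F ∈ Δ, GFm F ∨ F = Fm.bot) →
    ∀ {Γ₁ : Multiset Fm}, MsCov Γ₁ Γc →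
    (∀ F ∈ Δ, ∀ Γ₂ : Multiset Fm, MsCov Γ₂ Γ₁ → NIG G Γ₂ F → NIG G Γ₂ G) →
    NIG G Γ₁ G := by
  intro n
  induction n with
  | zero =>
      intro Γc Δ p hh
      exact absurd hh (by have := CProof.cheight_pos p; omega)
  | succ n ih =>
      intro Γc Δ p hh hΓA hSΔ Γ₁ hcov k
      cases p with
      | ax h =>
          rcases h with htop | ⟨A, hA, h1, h2⟩
          · exact k Fm.top htop Γ₁ (msCov_refl Γ₁)
              (NIG.ax (Or.inl (Multiset.mem_singleton_self _)))
          · exact k A h2 Γ₁ (msCov_refl Γ₁)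
              (NIG.ax (Or.inr ⟨A, hA, msCov_mem_atom hcov h1 hA,
                Multiset.mem_singleton_self _⟩))
      | @contrL B Γ' Δ sub =>
          simp only [CProof.cheight] at hh
          obtain ⟨S, Γd, hS, hrest, rfl⟩ := msCov_focus hcov
          have hΓA' : ∀ X ∈ B ::ₘ B ::ₘ Γ', DFm X := by
            intro X hX
            rcases Multiset.mem_cons.1 hX with rfl | hX
            · exact hΓA X (Multiset.mem_cons_self _ _)
            · exact hΓA X hX
          have hres := ih sub (by omega) hΓA' hSΔ
            (msCov_cons hS (msCov_cons hS hrest))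
            (fun F hF Γ₂ h2 pf => k F hF Γ₂
              (msCov_trans h2 (msCov_weak_left' S (msCov_refl (S + Γd)))) pf)
          exact igContrMany S hres
      | @contrR B Γc Δ' sub =>
          simp only [CProof.cheight] at hh
          have hSΔ' : ∀ F ∈ B ::ₘ B ::ₘ Δ', GFm F ∨ F = Fm.bot := by
            intro F hF
            rcases Multiset.mem_cons.1 hF with rfl | hF
            · exact hSΔ F (Multiset.mem_cons_self _ _)
            · exact hSΔ F hF
          refine ih sub (by omega) hΓA hSΔ' hcov ?_
          intro F hF Γ₂ h2 pf
          rcases Multiset.mem_cons.1 hF with rfl | hF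
          · exact k F (Multiset.mem_cons_self _ _) Γ₂ h2 pf
          · exact k F hF Γ₂ h2 pf
      | @botR D₀ Γc Δ' sub =>
          simp only [CProof.cheight] at hh
          have hSΔ' : ∀ F ∈ Fm.bot ::ₘ Δ', GFm F ∨ F = Fm.bot := by
            intro F hF
            rcases Multiset.mem_cons.1 hF with rfl | hF
            · exact Or.inr rfl
            · exact hSΔ F (Multiset.mem_cons_of_mem hF)
          refine ih sub (by omega) hΓA hSΔ' hcov ?_
          intro F hF Γ₂ h2 pf
          rcases Multiset.mem_cons.1 hF with rfl | hF
          · exact NIG.botR pf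
          · exact k F (Multiset.mem_cons_of_mem hF) Γ₂ h2 pf
      | @andL B D Γ' Δ sub =>
          simp only [CProof.cheight] at hh
          obtain ⟨hB, hD⟩ := DFm_conj_inv (hΓA _ (Multiset.mem_cons_self _ _))
          have hΓA' : ∀ X ∈ B ::ₘ D ::ₘ (B.conj D) ::ₘ Γ', DFm X := by
            intro X hX
            rcases Multiset.mem_cons.1 hX with rfl | hX
            · exact hB
            rcases Multiset.mem_cons.1 hX with rfl | hX
            · exact hD
            · exact hΓA X hX
          obtain ⟨S, Γd, hS, hrest, rfl⟩ := msCov_focus hcov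
          cases hS with
          | refl =>
              simp only [Multiset.singleton_add] at k ⊢
              have hres := ih sub (by omega) hΓA' hSΔ
                (msCov_cons_refl B (msCov_cons_refl D (msCov_cons_refl _ hrest)))
                (fun F hF Γ₂ h2 pf => k F hF Γ₂
                  (msCov_trans h2 (msCov_weak_left B (msCov_weak_left D
                    (msCov_refl _)))) pf)
              exact NIG.andL hres
          | @conj S₁ S₂ _ _ hS1 hS2 =>
              have h1 : MsCov (S₁ + (S₂ + ((S₁ + S₂) + ((S₁ + S₂) + Γd))))
                  (B ::ₘ D ::ₘ (B.conj D) ::ₘ Γ') :=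
                msCov_cons hS1 (msCov_cons hS2 (msCov_cons (Cov.conj hS1 hS2)
                  (msCov_weak_left' _ hrest)))
              have h2 : MsCov ((S₁ + S₂) + ((S₁ + S₂) + ((S₁ + S₂) + Γd)))
                  (B ::ₘ D ::ₘ (B.conj D) ::ₘ Γ') :=
                msCov_mono_left h1 (le_of_eq (by abel))
              have hres := ih sub (by omega) hΓA' hSΔ h2
                (fun F hF Γ₂ h2' pf => k F hF Γ₂
                  (msCov_trans h2' (msCov_mono_left
                    (msCov_weak_left' (S₁ + S₂)
                      (msCov_weak_left' (S₁ + S₂) (msCov_refl _)))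
                    (le_of_eq (by abel)))) pf)
              have h3 := igContrMany (S₁ + S₂) hres
              exact igContrMany (S₁ + S₂) h3
      | @andR B D Γc Δ' s1 s2 =>
          simp only [CProof.cheight] at hh
          have hm : max s1.cheight s2.cheight ≤ n := by omega
          obtain ⟨hB, hD⟩ := gbot_conj (hSΔ _ (Multiset.mem_cons_self _ _))
          have hSΔ1 : ∀ F ∈ B ::ₘ Δ', GFm F ∨ F = Fm.bot := by
            intro F hF
            rcases Multiset.mem_cons.1 hF with rfl | hF
            · exact Or.inl hB
            · exact hSΔ F (Multiset.mem_cons_of_mem hF)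
          have hSΔ2 : ∀ F ∈ D ::ₘ Δ', GFm F ∨ F = Fm.bot := by
            intro F hF
            rcases Multiset.mem_cons.1 hF with rfl | hF
            · exact Or.inl hD
            · exact hSΔ F (Multiset.mem_cons_of_mem hF)
          refine ih s1 (le_trans (le_max_left _ _) hm) hΓA hSΔ1 hcov ?_
          intro F hF Γ₂ h2 pf
          rcases Multiset.mem_cons.1 hF with rfl | hF
          · refine ih s2 (le_trans (le_max_right _ _) hm) hΓA hSΔ2
              (msCov_trans h2 hcov) ?_
            intro F' hF' Γ₃ h3 pf'
            rcases Multiset.mem_cons.1 hF' with rfl | hF'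
            · exact k (F.conj F') (Multiset.mem_cons_self _ _) Γ₃
                (msCov_trans h3 h2) (NIG.andR (lemS pf h3) pf')
            · exact k F' (Multiset.mem_cons_of_mem hF') Γ₃ (msCov_trans h3 h2) pf'
          · exact k F (Multiset.mem_cons_of_mem hF) Γ₂ h2 pf
      | @orL B D Γ' Δ s1 s2 =>
          simp only [CProof.cheight] at hh
          have hm : max s1.cheight s2.cheight ≤ n := by omega
          obtain ⟨hB, hD⟩ := DFm_disj_inv (hΓA _ (Multiset.mem_cons_self _ _))
          have hΓA1 : ∀ X ∈ B ::ₘ Γ', DFm X := by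
            intro X hX
            rcases Multiset.mem_cons.1 hX with rfl | hX
            · exact hB
            · exact hΓA X (Multiset.mem_cons_of_mem hX)
          have hΓA2 : ∀ X ∈ D ::ₘ Γ', DFm X := by
            intro X hX
            rcases Multiset.mem_cons.1 hX with rfl | hX
            · exact hD
            · exact hΓA X (Multiset.mem_cons_of_mem hX)
          obtain ⟨S, Γd, hS, hrest, rfl⟩ := msCov_focus hcov
          cases hS with
          | refl =>
              simp only [Multiset.singleton_add] at k ⊢
              refine NIG.orLG ?_ ?_
              · refine ih s1 (le_trans (le_max_left _ _) hm) hΓA1 hSΔ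
                  (msCov_cons_refl B hrest) ?_
                intro F hF Γ₃ h3 pf
                exact k F hF Γ₃ (msCov_trans h3
                  (msCov_cons_cov (Cov.disjl (Cov.refl B)) (msCov_refl Γd))) pf
              · refine ih s2 (le_trans (le_max_right _ _) hm) hΓA2 hSΔ
                  (msCov_cons_refl D hrest) ?_
                intro F hF Γ₃ h3 pf
                exact k F hF Γ₃ (msCov_trans h3
                  (msCov_cons_cov (Cov.disjr (Cov.refl D)) (msCov_refl Γd))) pf
          | disjl hS' =>
              exact ih s1 (le_trans (le_max_left _ _) hm) hΓA1 hSΔ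
                (msCov_cons hS' hrest) k
          | disjr hS' =>
              exact ih s2 (le_trans (le_max_right _ _) hm) hΓA2 hSΔ
                (msCov_cons hS' hrest) k
      | @orR1 B D Γc Δ' sub =>
          simp only [CProof.cheight] at hh
          obtain ⟨hB, hD⟩ := gbot_disj (hSΔ _ (Multiset.mem_cons_self _ _))
          have hSΔ' : ∀ F ∈ B ::ₘ Δ', GFm F ∨ F = Fm.bot := by
            intro F hF
            rcases Multiset.mem_cons.1 hF with rfl | hF
            · exact Or.inl hB
            · exact hSΔ F (Multiset.mem_cons_of_mem hF)
          refine ih sub (by omega) hΓA hSΔ' hcov ?_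
          intro F hF Γ₂ h2 pf
          rcases Multiset.mem_cons.1 hF with rfl | hF
          · exact k (F.disj D) (Multiset.mem_cons_self _ _) Γ₂ h2 (NIG.orR1 pf)
          · exact k F (Multiset.mem_cons_of_mem hF) Γ₂ h2 pf
      | @orR2 B D Γc Δ' sub =>
          simp only [CProof.cheight] at hh
          obtain ⟨hB, hD⟩ := gbot_disj (hSΔ _ (Multiset.mem_cons_self _ _))
          have hSΔ' : ∀ F ∈ D ::ₘ Δ', GFm F ∨ F = Fm.bot := by
            intro F hF
            rcases Multiset.mem_cons.1 hF with rfl | hF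
            · exact Or.inl hD
            · exact hSΔ F (Multiset.mem_cons_of_mem hF)
          refine ih sub (by omega) hΓA hSΔ' hcov ?_
          intro F hF Γ₂ h2 pf
          rcases Multiset.mem_cons.1 hF with rfl | hF
          · exact k (B.disj F) (Multiset.mem_cons_self _ _) Γ₂ h2 (NIG.orR2 pf)
          · exact k F (Multiset.mem_cons_of_mem hF) Γ₂ h2 pf
      | @impL B D Γ' Δ' Θ s1 s2 =>
          simp only [CProof.cheight] at hh
          have hm : max s1.cheight s2.cheight ≤ n := by omega
          obtain ⟨hB, hD⟩ := DFm_imp_inv (hΓA _ (Multiset.mem_cons_self _ _))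
          have hΓA2 : ∀ X ∈ D ::ₘ Γ', DFm X := by
            intro X hX
            rcases Multiset.mem_cons.1 hX with rfl | hX
            · exact hD
            · exact hΓA X (Multiset.mem_cons_of_mem hX)
          have hSΔ2 : ∀ F ∈ Θ, GFm F ∨ F = Fm.bot := fun F hF =>
            hSΔ F (Multiset.mem_add.2 (Or.inr hF))
          obtain ⟨S, Γd, hS, hrest, rfl⟩ := msCov_focus hcov
          cases hS with
          | refl =>
              simp only [Multiset.singleton_add] at k ⊢
              have hSΔ1 : ∀ F ∈ B ::ₘ Δ', GFm F ∨ F = Fm.bot := by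
                intro F hF
                rcases Multiset.mem_cons.1 hF with rfl | hF
                · exact Or.inl hB
                · exact hSΔ F (Multiset.mem_add.2 (Or.inl hF))
              refine ih s1 (le_trans (le_max_left _ _) hm) hΓA hSΔ1
                (msCov_cons_refl _ hrest) ?_
              intro F hF Γ₂ h2 pf
              rcases Multiset.mem_cons.1 hF with rfl | hF
              · -- F = B : use the implication
                obtain ⟨S', Γ₂d, hS2, hrest2, rfl⟩ := msCov_focus h2
                cases hS2 with
                | refl =>
                    simp only [Multiset.singleton_add] at pf ⊢
                    refine NIG.impL pf ?_
                    refine ih s2 (le_trans (le_max_right _ _) hm) hΓA2 hSΔ2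
                      (msCov_cons_refl D (msCov_trans hrest2 hrest)) ?_
                    intro F' hF' Γ₃ h3 pf'
                    refine k F' (Multiset.mem_add.2 (Or.inr hF')) Γ₃
                      (msCov_trans h3 (msCov_cons_cov (Cov.imp (Cov.refl D))
                        hrest2)) pf'
                | imp hS2' =>
                    refine ih s2 (le_trans (le_max_right _ _) hm) hΓA2 hSΔ2
                      (msCov_cons hS2' (msCov_trans hrest2 hrest)) ?_
                    intro F' hF' Γ₃ h3 pf'
                    exact k F' (Multiset.mem_add.2 (Or.inr hF')) Γ₃
                      (msCov_trans h3 h2) pf'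
              · exact k F (Multiset.mem_add.2 (Or.inl hF)) Γ₂ h2 pf
          | imp hS' =>
              refine ih s2 (le_trans (le_max_right _ _) hm) hΓA2 hSΔ2
                (msCov_cons hS' hrest) ?_
              intro F hF Γ₂ h2 pf
              exact k F (Multiset.mem_add.2 (Or.inr hF)) Γ₂ h2 pf
      | @impR B D Γc Δ' sub =>
          simp only [CProof.cheight] at hh
          obtain ⟨hB, hD⟩ := gbot_imp (hSΔ _ (Multiset.mem_cons_self _ _))
          have hΓA' : ∀ X ∈ B ::ₘ Γc, DFm X := by
            intro X hX
            rcases Multiset.mem_cons.1 hX with rfl | hX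
            · exact hB
            · exact hΓA X hX
          have hSΔ' : ∀ F ∈ D ::ₘ Δ', GFm F ∨ F = Fm.bot := by
            intro F hF
            rcases Multiset.mem_cons.1 hF with rfl | hF
            · exact Or.inl hD
            · exact hSΔ F (Multiset.mem_cons_of_mem hF)
          have hres : NIG G (B ::ₘ Γ₁) G := by
            refine ih sub (by omega) hΓA' hSΔ' (msCov_cons_refl B hcov) ?_
            intro F hF Γ₂ h2 pf
            rcases Multiset.mem_cons.1 hF with rfl | hF
            · exact k (B.imp F) (Multiset.mem_cons_self _ _) Γ₂
                (msCov_mono_right h2 (Multiset.le_cons_self _ _))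
                (NIG.impR (lemS pf (msCov_weak_left B (msCov_refl Γ₂))))
            · exact k F (Multiset.mem_cons_of_mem hF) Γ₂
                (msCov_mono_right h2 (Multiset.le_cons_self _ _)) pf
          exact k (B.imp D) (Multiset.mem_cons_self _ _) Γ₁ (msCov_refl Γ₁)
            (NIG.impR (NIG.resG hres))
      | @allL B Γ' Δ t sub =>
          simp only [CProof.cheight] at hh
          have hall := DFm_all_inv (hΓA _ (Multiset.mem_cons_self _ _))
          have hΓA' : ∀ X ∈ (B.inst t) ::ₘ (Fm.all B) ::ₘ Γ', DFm X := by
            intro X hX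
            rcases Multiset.mem_cons.1 hX with rfl | hX
            · exact hall.inst t
            · exact hΓA X hX
          obtain ⟨S, Γd, hS, hrest, rfl⟩ := msCov_focus hcov
          cases hS with
          | refl =>
              simp only [Multiset.singleton_add] at k ⊢
              have hres := ih sub (by omega) hΓA' hSΔ
                (msCov_cons_refl _ (msCov_cons_refl _ hrest))
                (fun F hF Γ₂ h2 pf => k F hF Γ₂
                  (msCov_trans h2 (msCov_weak_left _ (msCov_refl _))) pf)
              exact NIG.allL t hres
      | @exR B Γc Δ' t sub =>
          simp only [CProof.cheight] at hh
          have hex := gbot_ex (hSΔ _ (Multiset.mem_cons_self _ _))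
          have hSΔ' : ∀ F ∈ (B.inst t) ::ₘ Δ', GFm F ∨ F = Fm.bot := by
            intro F hF
            rcases Multiset.mem_cons.1 hF with rfl | hF
            · exact Or.inl (hex.inst t)
            · exact hSΔ F (Multiset.mem_cons_of_mem hF)
          refine ih sub (by omega) hΓA hSΔ' hcov ?_
          intro F hF Γ₂ h2 pf
          rcases Multiset.mem_cons.1 hF with rfl | hF
          · exact k (Fm.ex B) (Multiset.mem_cons_self _ _) Γ₂ h2 (NIG.exR t pf)
          · exact k F (Multiset.mem_cons_of_mem hF) Γ₂ h2 pf
      | @exL B Γ' Δ c hc sub =>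
          simp only [CProof.cheight] at hh
          have hBD := DFm_ex_inv (hΓA _ (Multiset.mem_cons_self _ _))
          have hcB : ¬ B.constIn c := hc.1 (Fm.ex B) (Multiset.mem_cons_self _ _)
          have hcΓ' : ∀ X ∈ Γ', ¬ X.constIn c := fun X hX =>
            hc.1 X (Multiset.mem_cons_of_mem hX)
          obtain ⟨S, Γd, hS, hrest, rfl⟩ := msCov_focus hcov
          cases hS with
          | refl =>
              simp only [Multiset.singleton_add] at k ⊢
              set s : Finset ℕ := mconsts ((Fm.ex B) ::ₘ Γd) ∪ G.consts with hs
              set c' : ℕ := freshC s with hc'def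
              obtain ⟨q, hq⟩ : ∃ q : CProof ((B.inst (Tm.const c')) ::ₘ Γ') Δ,
                  q.cheight ≤ n := by
                refine ⟨(cRen sub (Function.update id c c')).cCast ?_ ?_, ?_⟩
                · rw [Multiset.map_cons, inst_ren_upd hcB, map_ren_upd_eq_self hcΓ']
                · exact map_ren_upd_eq_self hc.2
                · rw [CProof.cCast_cheight, cRen_cheight]; omega
              have hΓA' : ∀ X ∈ (B.inst (Tm.const c')) ::ₘ Γ', DFm X := by
                intro X hX
                rcases Multiset.mem_cons.1 hX with rfl | hX
                · exact hBD.inst _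
                · exact hΓA X (Multiset.mem_cons_of_mem hX)
              have hres := ih q hq hΓA' hSΔ
                (msCov_cons_refl _ hrest)
                (fun F hF Γ₂ h2 pf => k F hF Γ₂
                  (msCov_trans h2 (msCov_cons_cov (Cov.exc c' (Cov.refl _))
                    (msCov_refl Γd))) pf)
              refine NIG.exL c' ⟨?_, ?_⟩ ?_ hres
              · intro X hX
                exact not_constIn_of_fresh (subset_trans (consts_subset_mconsts hX)
                  Finset.subset_union_left)
              · intro X hX
                rw [Multiset.mem_singleton] at hX
                subst hX
                exact not_constIn_of_fresh Finset.subset_union_right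
              · exact not_constIn_of_fresh Finset.subset_union_right
          | exc c₀ hS' =>
              obtain ⟨q, hq⟩ : ∃ q : CProof ((B.inst (Tm.const c₀)) ::ₘ Γ') Δ,
                  q.cheight ≤ n := by
                refine ⟨(cRen sub (Function.update id c c₀)).cCast ?_ ?_, ?_⟩
                · rw [Multiset.map_cons, inst_ren_upd hcB, map_ren_upd_eq_self hcΓ']
                · exact map_ren_upd_eq_self hc.2
                · rw [CProof.cCast_cheight, cRen_cheight]; omega
              have hΓA' : ∀ X ∈ (B.inst (Tm.const c₀)) ::ₘ Γ', DFm X := by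
                intro X hX
                rcases Multiset.mem_cons.1 hX with rfl | hX
                · exact hBD.inst _
                · exact hΓA X (Multiset.mem_cons_of_mem hX)
              exact ih q hq hΓA' hSΔ (msCov_cons hS' hrest) k
      | @allR B Γc Δ' c hc sub =>
          exact absurd (hSΔ _ (Multiset.mem_cons_self _ _))
            (by rintro (h | h) <;> cases h)

/-- Theorem `firstmodified`: for a multiset `Γ` of
D-formulas and a G-formula `G`, the sequent `Γ → G` has a C-proof if and only
if it has an I_G-proof containing no occurrences of the ∨-L rule. -/
theorem statement_12 (Γ : Multiset Fm) (G : Fm) (hΓ : ∀ X ∈ Γ, DFm X) (hG : GFm G) :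
    Nonempty (CProof Γ ({G} : Multiset Fm)) ↔
      ∃ p : IGProof G Γ G, p.orLCount = 0 := by
  constructor
  · rintro ⟨p⟩
    have hSΔ : ∀ F ∈ ({G} : Multiset Fm), GFm F ∨ F = Fm.bot := by
      intro F hF
      rw [Multiset.mem_singleton] at hF
      subst hF
      exact Or.inl hG
    have hk : ∀ F ∈ ({G} : Multiset Fm), ∀ Γ₂ : Multiset Fm, MsCov Γ₂ Γ →
        NIG G Γ₂ F → NIG G Γ₂ G := by
      intro F hF Γ₂ _ pf
      rw [Multiset.mem_singleton] at hF
      subst hF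
      exact pf
    exact lemM p.cheight p le_rfl hΓ hSΔ (msCov_refl Γ) hk
  · rintro ⟨p, hp⟩
    obtain ⟨q⟩ := igToC p
    exact ⟨(CProof.contrR (B := G) (Δ := 0) (q.cCast rfl (by simp))).cCast rfl (by simp)⟩
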